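/- arXiv:1208.5835 — 8 statements merged into one kernel-verified Lean document; each statement's English description precedes it below -/
import Mathlib

section
/- If a connected graph G has exactly one main signless Laplacian eigenvalue, then every eigenvector of the largest signless Laplacian eigenvalue is a scalar multiple of the all-ones vector. -/
open Matrix Finset RealInnerProductSpace

/-- The signless Laplacian matrix `Q = D + A` of a simple graph. -/
def signlessLaplacian {n : ℕ} (G : SimpleGraph (Fin n)) [DecidableRel G.Adj] :
    Matrix (Fin n) (Fin n) ℝ :=
  G.degMatrix ℝ + G.adjMatrix ℝ

/-- `μ` is an eigenvalue of `M`. -/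
def IsEig {n : ℕ} (M : Matrix (Fin n) (Fin n) ℝ) (μ : ℝ) : Prop :=
  ∃ x : Fin n → ℝ, x ≠ 0 ∧ M.mulVec x = μ • x

/-- `μ` is a main eigenvalue of `M`: it has an eigenvector whose entry sum is nonzero. -/
def IsMainEig {n : ℕ} (M : Matrix (Fin n) (Fin n) ℝ) (μ : ℝ) : Prop :=
  ∃ x : Fin n → ℝ, x ≠ 0 ∧ M.mulVec x = μ • x ∧ ∑ i, x i ≠ 0

lemma euclid_sum_apply {n : ℕ} (c : Fin n → ℝ) (v : Fin n → EuclideanSpace ℝ (Fin n)) (i : Fin n)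
    {s : Finset (Fin n)} :
    (∑ k ∈ s, c k • v k) i = ∑ k ∈ s, c k • (v k i) := by
  induction s using Finset.induction with
  | empty => simp
  | @insert a s h ih =>
    rw [Finset.sum_insert h, Finset.sum_insert h, ← ih]
    simp [PiLp.add_apply, PiLp.smul_apply]

lemma ones_eig {n : ℕ} (G : SimpleGraph (Fin n)) [DecidableRel G.Adj]
    {μs : ℝ} (huniq : ∀ μ, IsMainEig (signlessLaplacian G) μ → μ = μs) :
    (signlessLaplacian G).mulVec (fun _ => 1) = μs • (fun _ => 1 : Fin n → ℝ) := by
  set Q := signlessLaplacian G with hQdef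
  have hQ : Q.IsHermitian := by
    rw [Matrix.IsHermitian, conjTranspose_eq_transpose_of_trivial]
    exact ((G.isSymm_degMatrix (R := ℝ)).add (G.isSymm_adjMatrix (α := ℝ)))
  set b := hQ.eigenvectorBasis with hb
  set ev := hQ.eigenvalues with hev
  set j : EuclideanSpace ℝ (Fin n) := WithLp.toLp 2 (fun _ => 1) with hj
  have hrepr : ∑ k, ⟪b k, j⟫ • b k = j := b.sum_repr' j
  have hcoef : ∀ k, ⟪b k, j⟫ = ∑ i, b k i := by
    intro k; simp [PiLp.inner_apply, hj]
  have hkey : ∀ k, ev k • (⇑(b k) : Fin n → ℝ) = μs • (⇑(b k) : Fin n → ℝ)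
      ∨ ⟪b k, j⟫ = 0 := by
    intro k
    rcases eq_or_ne ⟪b k, j⟫ 0 with h0 | h0
    · exact Or.inr h0
    · left
      have : ev k = μs := by
        apply huniq
        refine ⟨⇑(b k), ?_, hQ.mulVec_eigenvectorBasis k, ?_⟩
        · intro hz
          exact b.orthonormal.ne_zero k (by ext i; exact congrFun hz i)
        · exact hcoef k ▸ h0
      rw [this]
  have hsum : (j : Fin n → ℝ) = ∑ k, ⟪b k, j⟫ • (⇑(b k) : Fin n → ℝ) := by
    funext i
    rw [Finset.sum_apply]
    conv_lhs => rw [show j = ∑ k, ⟪b k, j⟫ • b k from hrepr.symm]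
    rw [euclid_sum_apply]
    simp
  rw [show (fun _ => (1:ℝ)) = j.ofLp from rfl, hsum, ← Matrix.mulVecLin_apply, map_sum]
  have hQb : ∀ k, Q *ᵥ ⇑(b k) = hQ.eigenvalues k • ⇑(b k) := fun k => hQ.mulVec_eigenvectorBasis k
  simp_rw [_root_.map_smul, Matrix.mulVecLin_apply, hQb]
  rw [Finset.smul_sum]
  apply Finset.sum_congr rfl
  intro k _
  rcases hkey k with h | h
  · rw [show (hQ.eigenvalues k • (⇑(b k) : Fin n → ℝ)) = μs • (⇑(b k) : Fin n → ℝ) from h]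
    rw [smul_comm]
  · rw [h]; simp

theorem stmt3 {n : ℕ} (G : SimpleGraph (Fin n)) [DecidableRel G.Adj]
    (hconn : G.Connected)
    (hone : ∃! μ : ℝ, IsMainEig (signlessLaplacian G) μ)
    (μ₁ : ℝ) (hμ : IsEig (signlessLaplacian G) μ₁)
    (hmax : ∀ μ, IsEig (signlessLaplacian G) μ → μ ≤ μ₁)
    (x : Fin n → ℝ) (hx : (signlessLaplacian G).mulVec x = μ₁ • x) :
    ∃ c : ℝ, x = fun _ => c := by
  have hne : Nonempty (Fin n) := hconn.nonempty
  obtain ⟨μs, _, huniq⟩ := hone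
  have hones := ones_eig G huniq
  -- entrywise: the graph is regular of real degree μs / 2
  have hdeg : ∀ i, 2 * (G.degree i : ℝ) = μs := by
    intro i
    have h := congrFun hones i
    simp [signlessLaplacian, Matrix.add_mulVec, SimpleGraph.degMatrix_mulVec_apply,
      Pi.add_apply] at h
    linarith
  -- μs is an eigenvalue, hence μs ≤ μ₁
  have h1ne : (fun _ => 1 : Fin n → ℝ) ≠ 0 := by
    intro h
    obtain ⟨i⟩ := hne
    exact one_ne_zero (congrFun h i)
  have hle : μs ≤ μ₁ := hmax μs ⟨fun _ => 1, h1ne, hones⟩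
  -- μ₁ ≤ μs via max-|entry| argument
  have hge : μ₁ ≤ μs := by
    obtain ⟨y, hyne, hy⟩ := hμ
    obtain ⟨i₀, -, hi₀⟩ := Finset.exists_max_image univ (fun i => |y i|) ⟨Classical.arbitrary _, mem_univ _⟩
    have hB : 0 < |y i₀| := by
      obtain ⟨i, hi⟩ := Function.ne_iff.mp hyne
      exact lt_of_lt_of_le (abs_pos.mpr hi) (hi₀ i (mem_univ i))
    have hrow := congrFun hy i₀
    simp [signlessLaplacian, Matrix.add_mulVec, SimpleGraph.degMatrix_mulVec_apply,
      Pi.add_apply] at hrow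
    have habs : |μ₁| * |y i₀| ≤ μs * |y i₀| := by
      calc |μ₁| * |y i₀| = |μ₁ * y i₀| := (abs_mul _ _).symm
        _ = |(G.degree i₀ : ℝ) * y i₀ + ∑ u ∈ G.neighborFinset i₀, y u| := by rw [hrow]
        _ ≤ |(G.degree i₀ : ℝ) * y i₀| + |∑ u ∈ G.neighborFinset i₀, y u| := abs_add_le _ _
        _ ≤ (G.degree i₀ : ℝ) * |y i₀| + ∑ u ∈ G.neighborFinset i₀, |y u| := by
            gcongr
            · rw [abs_mul, abs_of_nonneg (by positivity : (0:ℝ) ≤ (G.degree i₀ : ℝ))]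
            · exact Finset.abs_sum_le_sum_abs _ _
        _ ≤ (G.degree i₀ : ℝ) * |y i₀| + (G.degree i₀ : ℝ) * |y i₀| := by
            gcongr
            calc ∑ u ∈ G.neighborFinset i₀, |y u| ≤ ∑ _u ∈ G.neighborFinset i₀, |y i₀| :=
                Finset.sum_le_sum fun u _ => hi₀ u (mem_univ u)
              _ = (G.degree i₀ : ℝ) * |y i₀| := by
                rw [Finset.sum_const, nsmul_eq_mul, SimpleGraph.card_neighborFinset_eq_degree]
        _ = μs * |y i₀| := by rw [← hdeg i₀]; ring
    have := le_of_mul_le_mul_right habs hB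
    exact le_trans (le_abs_self μ₁) this
  have hμeq : μ₁ = μs := le_antisymm hge hle
  -- now the main argument: maximum entries propagate along edges
  obtain ⟨i₀, -, hi₀⟩ := Finset.exists_max_image univ x ⟨Classical.arbitrary _, mem_univ _⟩
  have hrow : ∀ i, ∑ u ∈ G.neighborFinset i, x u = (G.degree i : ℝ) * x i := by
    intro i
    have h := congrFun hx i
    simp [signlessLaplacian, Matrix.add_mulVec, SimpleGraph.degMatrix_mulVec_apply,
      Pi.add_apply] at h
    have h2 : 2 * (G.degree i : ℝ) = μ₁ := by rw [hμeq]; exact hdeg i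
    rw [← h2] at h
    linarith
  have hclosed : ∀ a b : Fin n, G.Adj a b → x a = x i₀ → x b = x i₀ := by
    intro a b hab ha
    have hsum : ∑ u ∈ G.neighborFinset a, x u = ∑ _u ∈ G.neighborFinset a, x i₀ := by
      rw [hrow a, ha, Finset.sum_const, nsmul_eq_mul, SimpleGraph.card_neighborFinset_eq_degree]
    have := (Finset.sum_eq_sum_iff_of_le (fun u _ => hi₀ u (mem_univ u))).mp hsum
    exact this b (G.mem_neighborFinset a b |>.mpr hab)
  have haux : ∀ (a v : Fin n) (_ : G.Walk a v), x a = x i₀ → x v = x i₀ := by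
    intro a v w
    induction w with
    | nil => exact id
    | cons h _ ih => exact fun ha => ih (hclosed _ _ h ha)
  have hall : ∀ v : Fin n, x v = x i₀ := by
    intro v
    obtain ⟨w⟩ := hconn.preconnected i₀ v
    exact haux i₀ v w rfl
  exact ⟨x i₀, funext hall⟩
end

section
/- Let M be a real symmetric positive semidefinite n×n matrix whose main eigenvalues are μ₁, …, μ_t, and let m(x) = (x − μ₁)(x − μ₂)⋯(x − μ_t). Then m(M)·j = 0, where j is the all-ones vector. -/
open Matrix Finset

lemma pow_mulVec_eig {n : ℕ} (M : Matrix (Fin n) (Fin n) ℝ) {v : Fin n → ℝ} {l : ℝ}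
    (hv : M.mulVec v = l • v) (k : ℕ) : (M ^ k).mulVec v = l ^ k • v := by
  induction k with
  | zero => simp
  | succ k ih =>
    rw [pow_succ, pow_succ, ← mulVec_mulVec, hv, mulVec_smul, ih, smul_smul, mul_comm]

lemma aeval_mulVec_eig {n : ℕ} (M : Matrix (Fin n) (Fin n) ℝ) {v : Fin n → ℝ} {l : ℝ}
    (hv : M.mulVec v = l • v) (p : Polynomial ℝ) :
    (Polynomial.aeval M p).mulVec v = p.eval l • v := by
  induction p using Polynomial.induction_on' with
  | add p q hp hq => simp [add_mulVec, hp, hq, add_smul]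
  | monomial k a =>
    rw [Polynomial.aeval_monomial, Polynomial.eval_monomial, ← mulVec_mulVec,
      pow_mulVec_eig M hv k]
    simp [Algebra.algebraMap_eq_smul_one, smul_mulVec, smul_smul]

theorem stmt4 {n t : ℕ} (M : Matrix (Fin n) (Fin n) ℝ) (hpsd : M.PosSemidef)
    (μ : Fin t → ℝ) (hinj : Function.Injective μ)
    (hmain : ∀ x : ℝ, IsMainEig M x ↔ ∃ i, μ i = x) :
    (Polynomial.aeval M (∏ i, (Polynomial.X - Polynomial.C (μ i)))).mulVec
      (fun _ => (1 : ℝ)) = 0 := by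
  classical
  have hM : M.IsHermitian := hpsd.isHermitian
  set b := hM.eigenvectorBasis with hb
  set lam := hM.eigenvalues with hlam
  set p : Polynomial ℝ := ∏ i, (Polynomial.X - Polynomial.C (μ i)) with hp
  set j : EuclideanSpace ℝ (Fin n) := WithLp.toLp 2 (fun _ => (1 : ℝ)) with hj
  have hsum : (j : Fin n → ℝ) = ∑ i, b.repr j i • ⇑(b i) := by
    have h := b.sum_repr j
    funext k
    simpa using congrFun (congrArg (fun x : EuclideanSpace ℝ (Fin n) => (x : Fin n → ℝ)) h.symm) k
  show (Polynomial.aeval M p).mulVec (j : Fin n → ℝ) = 0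
  rw [hsum]
  have hlin : (Polynomial.aeval M p).mulVec (∑ i, b.repr j i • ⇑(b i))
      = ∑ i, b.repr j i • ((Polynomial.aeval M p).mulVec ⇑(b i)) := by
    simp only [← mulVecLin_apply, map_sum, _root_.map_smul]
  rw [hlin]
  refine Finset.sum_eq_zero fun i _ => ?_
  rw [aeval_mulVec_eig M (hM.mulVec_eigenvectorBasis i) p]
  rcases eq_or_ne (b.repr j i) 0 with hc | hc
  · simp [hc]
  · have hmainlam : IsMainEig M (lam i) := by
      refine ⟨⇑(b i), ?_, hM.mulVec_eigenvectorBasis i, ?_⟩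
      · intro h0
        exact b.orthonormal.ne_zero i (by ext k; exact congrFun h0 k)
      · have : b.repr j i = ∑ k, b i k := by
          rw [b.repr_apply_apply]
          simp [hj, PiLp.inner_apply, RCLike.inner_apply]
        rw [this] at hc
        exact hc
    obtain ⟨k, hk⟩ := (hmain (lam i)).mp hmainlam
    have hpz : p.eval (lam i) = 0 := by
      rw [hp, Polynomial.eval_prod]
      exact Finset.prod_eq_zero (Finset.mem_univ k) (by simp [hk])
    simp [← hlam, hpz]
end

section
/- Let M be a real symmetric positive semidefinite n×n matrix with main eigenvalues μ₁, …, μ_t, and let m(x) = ∏ᵢ (x − μᵢ). If f is a real polynomial with f(M)·j = 0, then m(x) divides f(x). -/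
open Matrix Finset

lemma aeval_mulVec_eig_s5 {n : ℕ} (M : Matrix (Fin n) (Fin n) ℝ) {x : Fin n → ℝ} {c : ℝ}
    (hx : M.mulVec x = c • x) (f : Polynomial ℝ) :
    (Polynomial.aeval M f).mulVec x = f.eval c • x := by
  induction f using Polynomial.induction_on with
  | C a =>
      rw [Polynomial.aeval_C, Algebra.algebraMap_eq_smul_one]
      simp [Matrix.smul_mulVec, Matrix.one_mulVec]
  | add p q hp hq =>
      simp [Matrix.add_mulVec, hp, hq, add_smul]
  | monomial m a ih =>
      have h1 : (Polynomial.aeval M (Polynomial.C a * Polynomial.X ^ (m + 1)))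
          = (Polynomial.aeval M (Polynomial.C a * Polynomial.X ^ m)) * M := by
        simp [pow_succ, mul_assoc]
      rw [h1, ← Matrix.mulVec_mulVec, hx, Matrix.mulVec_smul, ih, smul_smul]
      congr 1
      simp [pow_succ]
      ring

theorem stmt5 {n t : ℕ} (M : Matrix (Fin n) (Fin n) ℝ) (hpsd : M.PosSemidef)
    (μ : Fin t → ℝ) (hinj : Function.Injective μ)
    (hmain : ∀ x : ℝ, IsMainEig M x ↔ ∃ i, μ i = x)
    (f : Polynomial ℝ)
    (hf : (Polynomial.aeval M f).mulVec (fun _ => (1 : ℝ)) = 0) :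
    (∏ i, (Polynomial.X - Polynomial.C (μ i))) ∣ f := by
  have hsym : Mᵀ = M := hpsd.1
  -- each μ i is a root of f
  have hroot : ∀ i, f.IsRoot (μ i) := by
    intro i
    obtain ⟨x, hx0, hxe, hxs⟩ := (hmain (μ i)).2 ⟨i, rfl⟩
    -- f(M) is symmetric
    have hFsym : (Polynomial.aeval M f)ᵀ = Polynomial.aeval M f := by
      have : (Polynomial.aeval M f).IsSymm := by
        clear hf
        induction f using Polynomial.induction_on with
        | C a =>
            rw [Polynomial.aeval_C, Algebra.algebraMap_eq_smul_one]
            exact Matrix.IsSymm.smul Matrix.isSymm_one a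
        | add p q hp hq =>
            rw [map_add]; exact Matrix.IsSymm.add hp hq
        | monomial m a ih =>
            rw [_root_.map_mul, Polynomial.aeval_X_pow, Polynomial.aeval_C,
              Algebra.algebraMap_eq_smul_one, smul_one_mul]
            exact Matrix.IsSymm.smul (Matrix.IsSymm.pow hsym (m + 1)) a
      exact this
    have key : x ⬝ᵥ (Polynomial.aeval M f).mulVec (fun _ => (1 : ℝ)) =
        ((Polynomial.aeval M f).mulVec x) ⬝ᵥ (fun _ => (1 : ℝ)) := by
      rw [Matrix.dotProduct_mulVec, ← Matrix.mulVec_transpose, hFsym]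
    rw [hf, dotProduct_zero, aeval_mulVec_eig_s5 M hxe f] at key
    have : (0 : ℝ) = f.eval (μ i) * ∑ j, x j := by
      rw [key]
      simp [dotProduct, Finset.mul_sum]
    have := this.symm
    rcases mul_eq_zero.1 this with h | h
    · exact h
    · exact absurd h hxs
  rcases eq_or_ne f 0 with rfl | hf0
  · exact dvd_zero _
  have hle : (Finset.univ.val.map μ) ≤ f.roots := by
    rw [Multiset.le_iff_count]
    intro a
    by_cases ha : a ∈ Finset.univ.val.map μ
    · obtain ⟨i, _, rfl⟩ := Multiset.mem_map.1 ha
      have hnd : (Finset.univ.val.map μ).Nodup :=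
        (Finset.univ.nodup).map hinj
      have h1 : Multiset.count (μ i) (Finset.univ.val.map μ) ≤ 1 :=
        Multiset.nodup_iff_count_le_one.1 hnd _
      have h2 : 1 ≤ Multiset.count (μ i) f.roots :=
        Multiset.count_pos.2 ((Polynomial.mem_roots hf0).2 (hroot i))
      omega
    · rw [Multiset.count_eq_zero_of_notMem ha]
      exact Nat.zero_le _
  have := (Multiset.prod_X_sub_C_dvd_iff_le_roots hf0 (Finset.univ.val.map μ)).2 hle
  simpa [Finset.prod, Multiset.map_map, Function.comp_def] using this
end

section
/- A connected graph G has exactly two main signless Laplacian eigenvalues if and only if G is a 2-walk (a, b)-parabolic graph for some positive integer a and non-negative integer b with a² − 8b > 0. -/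
open Matrix Finset

/-- `s(v)`: the sum of degrees of the neighbours of `v` (number of 2-walks from `v`). -/
def walkSum {n : ℕ} (G : SimpleGraph (Fin n)) [DecidableRel G.Adj] (v : Fin n) : ℕ :=
  ∑ u ∈ G.neighborFinset v, G.degree u

/-- The pair `(a, b)` witnesses that `G` is 2-walk parabolic:
`a` positive, `a² − 8b > 0` and `s(v) = −d(v)² + a·d(v) − b` for all `v`. -/
def ParabolicPair {n : ℕ} (G : SimpleGraph (Fin n)) [DecidableRel G.Adj] (p : ℕ × ℕ) : Prop :=
  0 < p.1 ∧ (p.1 : ℤ) ^ 2 - 8 * p.2 > 0 ∧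
    ∀ v, (walkSum G v : ℤ) = -(G.degree v : ℤ) ^ 2 + p.1 * G.degree v - p.2

section Helpers

variable {n : ℕ} (G : SimpleGraph (Fin n)) [DecidableRel G.Adj]

lemma sL_isSymm : (signlessLaplacian G).IsSymm :=
  (SimpleGraph.isSymm_degMatrix ℝ G).add (SimpleGraph.isSymm_adjMatrix G)

lemma sL_isHermitian : (signlessLaplacian G).IsHermitian := by
  have h := sL_isSymm G
  rw [Matrix.IsSymm] at h
  rw [Matrix.IsHermitian, conjTranspose]
  ext i j
  simpa using congrFun (congrFun h i) j

lemma sL_mulVec (x : Fin n → ℝ) (v : Fin n) :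
    (signlessLaplacian G *ᵥ x) v = G.degree v * x v + ∑ u ∈ G.neighborFinset v, x u := by
  simp [signlessLaplacian, add_mulVec, SimpleGraph.degMatrix_mulVec_apply,
    SimpleGraph.adjMatrix_mulVec_apply]

lemma sL_dot (x y : Fin n → ℝ) :
    (signlessLaplacian G *ᵥ x) ⬝ᵥ y = x ⬝ᵥ (signlessLaplacian G *ᵥ y) := by
  rw [Matrix.dotProduct_mulVec, ← Matrix.mulVec_transpose, (sL_isSymm G).eq]

lemma sL_one (v : Fin n) :
    (signlessLaplacian G *ᵥ (fun _ => (1:ℝ))) v = 2 * G.degree v := by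
  rw [sL_mulVec]
  rw [Finset.sum_const, ← SimpleGraph.card_neighborFinset_eq_degree]; simp [two_mul]

lemma sL_sq_one (v : Fin n) :
    (signlessLaplacian G *ᵥ (signlessLaplacian G *ᵥ fun _ => (1:ℝ))) v
      = 2 * (G.degree v : ℝ)^2 + 2 * walkSum G v := by
  rw [sL_mulVec]
  simp only [sL_one, walkSum]
  push_cast
  rw [Finset.mul_sum]
  ring

lemma sL_eq_inc : signlessLaplacian G = G.incMatrix ℝ * (G.incMatrix ℝ)ᵀ := by
  classical
  rw [SimpleGraph.incMatrix_mul_transpose]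
  ext a b
  by_cases h : a = b
  · subst h
    simp [signlessLaplacian, SimpleGraph.degMatrix, Matrix.diagonal]
  · simp [signlessLaplacian, SimpleGraph.degMatrix, Matrix.diagonal_apply_ne _ h, h]

lemma sL_posSemidef : (signlessLaplacian G).PosSemidef := by
  rw [sL_eq_inc]
  classical
  have := Matrix.posSemidef_self_mul_conjTranspose (G.incMatrix ℝ)
  simpa using this

lemma sL_eig_nonneg {μ : ℝ} (h : IsEig (signlessLaplacian G) μ) : 0 ≤ μ := by
  obtain ⟨x, hx, hQx⟩ := h
  have hxx : 0 < x ⬝ᵥ x := by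
    rcases Function.ne_iff.mp hx with ⟨i, hi⟩
    have : 0 < ∑ j, x j * x j := by
      apply Finset.sum_pos' (fun j _ => mul_self_nonneg _)
      exact ⟨i, Finset.mem_univ i, by simpa [mul_self_pos] using hi⟩
    simpa [dotProduct] using this
  have h2 := (sL_posSemidef G).dotProduct_mulVec_nonneg x
  rw [hQx] at h2
  have h3 : 0 ≤ μ * (x ⬝ᵥ x) := by
    simpa [dotProduct, Finset.mul_sum, mul_left_comm, mul_comm, mul_assoc] using h2
  by_contra hneg
  push_neg at hneg
  nlinarith

lemma eval_charpoly {m : ℕ} (M : Matrix (Fin m) (Fin m) ℝ) (μ : ℝ) :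
    M.charpoly.eval μ = det (μ • (1 : Matrix (Fin m) (Fin m) ℝ) - M) := by
  rw [Matrix.charpoly, ← Polynomial.coe_evalRingHom, RingHom.map_det]
  congr 1
  ext i j
  by_cases h : i = j
  · subst h; simp [Matrix.charmatrix_apply_eq, Matrix.one_apply]
  · simp [Matrix.charmatrix_apply_ne _ _ _ h, Matrix.one_apply_ne h]

lemma eig_root {m : ℕ} (M : Matrix (Fin m) (Fin m) ℝ) (μ : ℝ) (h : IsEig M μ) :
    M.charpoly.eval μ = 0 := by
  obtain ⟨x, hx, hMx⟩ := h
  rw [eval_charpoly]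
  rw [← Matrix.exists_mulVec_eq_zero_iff]
  refine ⟨x, hx, ?_⟩
  rw [Matrix.sub_mulVec, Matrix.smul_mulVec, Matrix.one_mulVec, hMx, sub_self]

lemma sL_int_matrix :
    ((G.degMatrix ℤ + G.adjMatrix ℤ).map ⇑(algebraMap ℤ ℝ)) = signlessLaplacian G := by
  ext i j
  by_cases h : i = j <;>
    simp [signlessLaplacian, SimpleGraph.degMatrix, Matrix.diagonal, h]

lemma sL_eig_isIntegral {μ : ℝ} (h : IsEig (signlessLaplacian G) μ) : IsIntegral ℤ μ := by
  refine ⟨(G.degMatrix ℤ + G.adjMatrix ℤ).charpoly, Matrix.charpoly_monic _, ?_⟩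
  rw [← Polynomial.eval_map, ← Matrix.charpoly_map, sL_int_matrix]
  exact eig_root _ _ h

lemma rat_integral_int (q : ℚ) (h : IsIntegral ℤ ((q : ℝ))) : ∃ m : ℤ, (m : ℚ) = q := by
  have h2 : IsIntegral ℤ q := by
    have heq : algebraMap ℚ ℝ q = (q : ℝ) := rfl
    rw [← heq] at h
    exact (isIntegral_algebraMap_iff (algebraMap ℚ ℝ).injective).mp h
  obtain ⟨m, hm⟩ := IsIntegrallyClosed.isIntegral_iff.mp h2
  exact ⟨m, hm⟩

lemma spectral_span {m : ℕ} {M : Matrix (Fin m) (Fin m) ℝ} (hM : M.IsHermitian)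
    (y : Fin m → ℝ) (h : ∀ j, ⇑(hM.eigenvectorBasis j) ⬝ᵥ y = 0) : y = 0 := by
  let y' : EuclideanSpace ℝ (Fin m) := WithLp.toLp 2 y
  have hy : ∀ j, (inner ℝ (hM.eigenvectorBasis j) y' : ℝ) = 0 := by
    intro j
    rw [PiLp.inner_apply]
    simpa [dotProduct, y', mul_comm] using h j
  have h2 := hM.eigenvectorBasis.sum_repr' y'
  simp_rw [hy, zero_smul, Finset.sum_const_zero] at h2
  simpa [y'] using congrArg WithLp.ofLp h2.symm

lemma main_quadratic {m : ℕ} {M : Matrix (Fin m) (Fin m) ℝ} (hM : M.IsHermitian)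
    (hsym : ∀ x y, (M *ᵥ x) ⬝ᵥ y = x ⬝ᵥ (M *ᵥ y))
    {μ₁ μ₂ : ℝ} (hmain : ∀ μ, IsMainEig M μ → (μ = μ₁ ∨ μ = μ₂)) :
    M *ᵥ (M *ᵥ fun _ => (1:ℝ)) - (μ₁ + μ₂) • (M *ᵥ fun _ => (1:ℝ))
      + (μ₁ * μ₂) • (fun _ => (1:ℝ)) = 0 := by
  set o : Fin m → ℝ := fun _ => (1:ℝ) with ho
  apply spectral_span hM
  intro j
  set b : Fin m → ℝ := ⇑(hM.eigenvectorBasis j) with hb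
  set lam : ℝ := hM.eigenvalues j with hlam
  have hev : M *ᵥ b = lam • b := hM.mulVec_eigenvectorBasis j
  have hdot : ∀ w : Fin m → ℝ, b ⬝ᵥ (M *ᵥ w) = lam * (b ⬝ᵥ w) := by
    intro w
    rw [← hsym, hev, smul_dotProduct, smul_eq_mul]
  have expand : b ⬝ᵥ (M *ᵥ (M *ᵥ o) - (μ₁ + μ₂) • (M *ᵥ o) + (μ₁ * μ₂) • o)
      = (lam - μ₁) * (lam - μ₂) * (b ⬝ᵥ o) := by
    rw [dotProduct_add, dotProduct_sub, dotProduct_smul,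
      dotProduct_smul, hdot, hdot]
    simp only [smul_eq_mul]
    ring
  rw [expand]
  by_cases hzero : b ⬝ᵥ o = 0
  · rw [hzero, mul_zero]
  · have hsum : ∑ i, b i ≠ 0 := by simpa [dotProduct, ho] using hzero
    have hbne : b ≠ 0 := by
      intro hb0
      apply hsum
      rw [hb0]
      simp
    have : IsMainEig M lam := ⟨b, hbne, hev, hsum⟩
    rcases hmain lam this with h | h <;> rw [h] <;> ring

/-- a regular graph with a parabolic pair has another parabolic pair -/
lemma regular_two_pairs (hne : Nonempty (Fin n))
    (hreg : ∀ v w : Fin n, G.degree v = G.degree w)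
    {p : ℕ × ℕ} (hp : ParabolicPair G p) :
    ∃ q : ℕ × ℕ, ParabolicPair G q ∧ q ≠ p := by
  obtain ⟨a, b⟩ := p
  obtain ⟨ha, hdisc, heq⟩ := hp
  let v₀ : Fin n := Classical.arbitrary _
  set c : ℕ := G.degree v₀ with hc
  have hdeg : ∀ v, G.degree v = c := fun v => hreg v v₀
  have hs : ∀ v, walkSum G v = c * c := by
    intro v
    rw [walkSum, Finset.sum_congr rfl (fun u _ => hdeg u), Finset.sum_const,
      SimpleGraph.card_neighborFinset_eq_degree, hdeg v, smul_eq_mul]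
  have hb : (b : ℤ) = a * c - 2 * (c : ℤ)^2 := by
    have h0 := heq v₀
    rw [hs v₀, hdeg v₀] at h0
    push_cast at h0
    have hcc : (c:ℤ)^2 = (c:ℤ)*(c:ℤ) := sq (c:ℤ)
    linarith
  set a' : ℕ := if a + 1 = 4*c then a + 2 else a + 1 with ha'
  have haa : a < a' ∧ a' ≠ 4 * c := by
    rw [ha']; split_ifs with h <;> omega
  have hb' : ((b + c * (a' - a) : ℕ) : ℤ) = a' * c - 2 * (c : ℤ)^2 := by
    have hle : a ≤ a' := haa.1.le
    push_cast [hle]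
    rw [hb]; ring
  refine ⟨(a', b + c * (a' - a)), ⟨?_, ?_, ?_⟩, ?_⟩
  · simp only []; omega
  · show (a' : ℤ)^2 - 8 * ((b + c * (a' - a) : ℕ) : ℤ) > 0
    rw [hb']
    have h4 : (a' : ℤ) - 4 * c ≠ 0 := by
      intro h
      apply haa.2
      omega
    have : ((a' : ℤ) - 4 * c)^2 > 0 := lt_of_le_of_ne (sq_nonneg _) (Ne.symm (pow_ne_zero 2 h4))
    nlinarith
  · intro v
    show (walkSum G v : ℤ) = -(G.degree v : ℤ)^2 + a' * G.degree v - ((b + c * (a' - a) : ℕ) : ℤ)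
    rw [hs v, hdeg v, hb']
    push_cast
    ring
  · intro h
    have := congrArg Prod.fst h
    simp at this
    omega

end Helpers

section MainProof

variable {n : ℕ} (G : SimpleGraph (Fin n)) [DecidableRel G.Adj]

lemma parabolic_unique (v0 w0 : Fin n) (hvw : G.degree v0 ≠ G.degree w0)
    {p q : ℕ × ℕ} (hp : ParabolicPair G p) (hq : ParabolicPair G q) : p = q := by
  have e1v := hp.2.2 v0
  have e1w := hp.2.2 w0
  have e2v := hq.2.2 v0
  have e2w := hq.2.2 w0
  have key : ((p.1 : ℤ) - q.1) * ((G.degree v0 : ℤ) - G.degree w0) = 0 := by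
    linear_combination e2v - e1v + e1w - e2w
  have hdd : ((G.degree v0 : ℤ) - G.degree w0) ≠ 0 := by
    intro h
    exact hvw (by exact_mod_cast sub_eq_zero.mp h)
  have h1 : (p.1 : ℤ) = q.1 := by
    rcases mul_eq_zero.mp key with h | h
    · linarith [sub_eq_zero.mp h]
    · exact absurd h hdd
  have h2 : (p.2 : ℤ) = q.2 := by linear_combination e1v - e2v + (G.degree v0 : ℤ) * h1
  have hp1 : p.1 = q.1 := by exact_mod_cast h1
  have hp2 : p.2 = q.2 := by exact_mod_cast h2
  exact Prod.ext hp1 hp2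

lemma forward_dir (hne : Nonempty (Fin n))
    (h : ∃ μ₁ μ₂ : ℝ, μ₁ ≠ μ₂ ∧
        ∀ μ, IsMainEig (signlessLaplacian G) μ ↔ (μ = μ₁ ∨ μ = μ₂)) :
    ∃! p : ℕ × ℕ, ParabolicPair G p := by
  obtain ⟨μ₁, μ₂, hμne, hiff⟩ := h
  have hm1 : IsMainEig (signlessLaplacian G) μ₁ := (hiff μ₁).mpr (Or.inl rfl)
  have hm2 : IsMainEig (signlessLaplacian G) μ₂ := (hiff μ₂).mpr (Or.inr rfl)
  have he1 : IsEig (signlessLaplacian G) μ₁ := by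
    obtain ⟨x, h1, h2, _⟩ := hm1; exact ⟨x, h1, h2⟩
  have he2 : IsEig (signlessLaplacian G) μ₂ := by
    obtain ⟨x, h1, h2, _⟩ := hm2; exact ⟨x, h1, h2⟩
  -- non-regularity
  have hnonreg : ∃ v w : Fin n, G.degree v ≠ G.degree w := by
    by_contra hcon
    push_neg at hcon
    set c : ℕ := G.degree (Classical.arbitrary (Fin n)) with hc
    have hmu : ∀ μ, IsMainEig (signlessLaplacian G) μ → μ = 2 * (c : ℝ) := by
      rintro μ ⟨x, hx, hQx, hsum⟩
      have h1 := sL_dot G x (fun _ => (1:ℝ))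
      have hQ1 : (signlessLaplacian G *ᵥ fun _ => (1:ℝ)) = fun _ => 2 * (c : ℝ) := by
        funext v
        rw [sL_one, hcon v (Classical.arbitrary (Fin n))]
      rw [hQx, hQ1] at h1
      have h2 : μ * ∑ i, x i = 2 * (c:ℝ) * ∑ i, x i := by
        simp only [dotProduct, smul_eq_mul, Pi.smul_apply, mul_one] at h1
        rw [Finset.mul_sum, h1, ← Finset.sum_mul, mul_comm]
      exact mul_right_cancel₀ hsum h2
    exact hμne ((hmu μ₁ hm1).trans (hmu μ₂ hm2).symm)
  obtain ⟨v0, w0, hvw⟩ := hnonreg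
  -- the quadratic vector identity
  have hz := main_quadratic (sL_isHermitian G) (sL_dot G) (fun μ h => (hiff μ).mp h)
  have heqv : ∀ v, 2*(G.degree v:ℝ)^2 + 2*(walkSum G v)
      - (μ₁+μ₂)*(2*(G.degree v:ℝ)) + μ₁*μ₂ = 0 := by
    intro v
    have h0 := congrFun hz v
    simp only [Pi.add_apply, Pi.sub_apply, Pi.smul_apply, smul_eq_mul, Pi.zero_apply] at h0
    rw [sL_sq_one, sL_one] at h0
    linarith
  -- A = μ₁ + μ₂ is rational
  have hddR : ((G.degree v0 : ℝ) - G.degree w0) ≠ 0 := by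
    intro h
    exact hvw (by exact_mod_cast sub_eq_zero.mp h)
  set qA : ℚ := (((G.degree v0:ℤ)^2 + walkSum G v0 - (G.degree w0:ℤ)^2 - walkSum G w0 : ℤ) : ℚ)
      / (((G.degree v0 : ℤ) - G.degree w0 : ℤ) : ℚ) with hqAdef
  have hqA : (qA : ℝ) = μ₁ + μ₂ := by
    rw [hqAdef]
    push_cast
    rw [div_eq_iff hddR]
    have h1 := heqv v0
    have h2 := heqv w0
    linarith
  have hintA : IsIntegral ℤ (μ₁ + μ₂) :=
    (sL_eig_isIntegral G he1).add (sL_eig_isIntegral G he2)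
  obtain ⟨mA, hmA⟩ := rat_integral_int qA (by rw [hqA]; exact hintA)
  have hAval : (mA : ℝ) = μ₁ + μ₂ := by
    rw [← hqA, ← hmA]
    push_cast
    rfl
  have h1nn := sL_eig_nonneg G he1
  have h2nn := sL_eig_nonneg G he2
  have hApos : 0 < μ₁ + μ₂ := by
    rcases lt_or_eq_of_le h1nn with h | h
    · linarith
    · rcases lt_or_eq_of_le h2nn with h' | h'
      · linarith
      · exact absurd (h.symm.trans h') hμne
  have hmApos : 0 < mA := by
    have : (0:ℝ) < (mA:ℝ) := by rw [hAval]; exact hApos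
    exact_mod_cast this
  set bz : ℤ := mA * G.degree v0 - (G.degree v0:ℤ)^2 - walkSum G v0 with hbzdef
  have hC : μ₁ * μ₂ = 2 * (bz : ℝ) := by
    have h1 := heqv v0
    rw [← hAval] at h1
    rw [hbzdef]
    push_cast
    linarith
  have hbznn : 0 ≤ bz := by
    have h0 : (0:ℝ) ≤ μ₁ * μ₂ := mul_nonneg h1nn h2nn
    rw [hC] at h0
    have : (0:ℝ) ≤ (bz:ℝ) := by linarith
    exact_mod_cast this
  have hcast1 : ((mA.toNat : ℕ) : ℤ) = mA := Int.toNat_of_nonneg hmApos.le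
  have hcast2 : ((bz.toNat : ℕ) : ℤ) = bz := Int.toNat_of_nonneg hbznn
  have hpp : ParabolicPair G (mA.toNat, bz.toNat) := by
    refine ⟨by omega, ?_, ?_⟩
    · show ((mA.toNat : ℕ) : ℤ)^2 - 8 * ((bz.toNat : ℕ) : ℤ) > 0
      rw [hcast1, hcast2]
      have hr : (mA:ℝ)^2 - 8 * (bz:ℝ) = (μ₁ - μ₂)^2 := by
        rw [hAval]
        linear_combination (4:ℝ) * hC
      have hpos : (0:ℝ) < (mA:ℝ)^2 - 8 * (bz:ℝ) := by
        rw [hr]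
        exact lt_of_le_of_ne (sq_nonneg _) (Ne.symm (pow_ne_zero 2 (sub_ne_zero.mpr hμne)))
      exact_mod_cast hpos
    · intro v
      show (walkSum G v : ℤ) = -(G.degree v : ℤ)^2 + ((mA.toNat : ℕ) : ℤ) * G.degree v
        - ((bz.toNat : ℕ) : ℤ)
      rw [hcast1, hcast2]
      have h1 := heqv v
      rw [← hAval, hC] at h1
      have : (walkSum G v : ℝ) = -(G.degree v : ℝ)^2 + (mA:ℝ) * G.degree v - (bz:ℝ) := by
        linarith
      exact_mod_cast this
  exact ⟨(mA.toNat, bz.toNat), hpp, fun q hq => parabolic_unique G v0 w0 hvw hq hpp⟩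

end MainProof

section Backward

variable {n : ℕ} (G : SimpleGraph (Fin n)) [DecidableRel G.Adj]

lemma backward_dir (hne : Nonempty (Fin n))
    (h : ∃! p : ℕ × ℕ, ParabolicPair G p) :
    ∃ μ₁ μ₂ : ℝ, μ₁ ≠ μ₂ ∧
        ∀ μ, IsMainEig (signlessLaplacian G) μ ↔ (μ = μ₁ ∨ μ = μ₂) := by
  obtain ⟨⟨a, b⟩, hp, huniq⟩ := h
  have hnonreg : ∃ v w : Fin n, G.degree v ≠ G.degree w := by
    by_contra hcon
    push_neg at hcon
    obtain ⟨q, hq, hqne⟩ := regular_two_pairs G hne hcon hp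
    exact hqne (huniq q hq)
  obtain ⟨v0, w0, hvw⟩ := hnonreg
  obtain ⟨ha, hdisc, heq⟩ := hp
  simp only at ha hdisc heq
  have hdiscR : (0:ℝ) < (a:ℝ)^2 - 8*b := by exact_mod_cast hdisc
  set D : ℝ := Real.sqrt ((a:ℝ)^2 - 8*b) with hDdef
  have hDpos : 0 < D := Real.sqrt_pos.mpr hdiscR
  have hDsq : D^2 = (a:ℝ)^2 - 8*b := Real.sq_sqrt hdiscR.le
  set μ₁ : ℝ := ((a:ℝ) + D)/2 with hμ₁def
  set μ₂ : ℝ := ((a:ℝ) - D)/2 with hμ₂def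
  have hsum : μ₁ + μ₂ = (a:ℝ) := by rw [hμ₁def, hμ₂def]; ring
  have hprod : μ₁ * μ₂ = 2*(b:ℝ) := by
    rw [hμ₁def, hμ₂def]
    have expand : ((a:ℝ) + D)/2 * (((a:ℝ) - D)/2) = ((a:ℝ)^2 - D^2)/4 := by ring
    rw [expand, hDsq]
    ring
  have hμne : μ₁ ≠ μ₂ := by
    intro h
    have : D = 0 := by
      rw [hμ₁def, hμ₂def] at h
      linarith
    linarith
  -- vector identity from parabolic condition
  have hvec : ∀ v, (signlessLaplacian G *ᵥ (signlessLaplacian G *ᵥ fun _ => (1:ℝ))) v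
      = (a:ℝ) * (signlessLaplacian G *ᵥ fun _ => (1:ℝ)) v - 2*b := by
    intro v
    rw [sL_sq_one, sL_one]
    have h0 : (walkSum G v : ℝ) = -(G.degree v:ℝ)^2 + a*(G.degree v:ℝ) - b := by
      exact_mod_cast heq v
    linarith
  -- construction of main eigenvectors
  have hmk : ∀ μ ν : ℝ, μ + ν = (a:ℝ) → μ * ν = 2*(b:ℝ) → ν ≠ μ →
      IsMainEig (signlessLaplacian G) μ := by
    intro μ ν hsum' hprod' _
    set o : Fin n → ℝ := fun _ => (1:ℝ) with ho
    set y : Fin n → ℝ := (signlessLaplacian G *ᵥ o) - ν • o with hy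
    have hQy : signlessLaplacian G *ᵥ y = μ • y := by
      rw [hy, Matrix.mulVec_sub, Matrix.mulVec_smul]
      funext v
      simp only [Pi.sub_apply, Pi.smul_apply, smul_eq_mul]
      have h0 := hvec v
      linear_combination h0 - ((signlessLaplacian G *ᵥ o) v) * hsum' + hprod'
    have hyne : y ≠ 0 := by
      intro h0
      apply hvw
      have hv : (2:ℝ) * G.degree v0 = ν := by
        have := congrFun h0 v0
        simp only [hy, Pi.sub_apply, Pi.smul_apply, smul_eq_mul, Pi.zero_apply, ho,
          mul_one] at this
        rw [sL_one] at this
        linarith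
      have hw : (2:ℝ) * G.degree w0 = ν := by
        have := congrFun h0 w0
        simp only [hy, Pi.sub_apply, Pi.smul_apply, smul_eq_mul, Pi.zero_apply, ho,
          mul_one] at this
        rw [sL_one] at this
        linarith
      have : (G.degree v0 : ℝ) = G.degree w0 := by linarith
      exact_mod_cast this
    have hsumy : ∑ i, y i ≠ 0 := by
      intro h0
      apply hyne
      have hdoty : y ⬝ᵥ o = 0 := by
        simpa [dotProduct, ho] using h0
      have hyy : y ⬝ᵥ y = 0 := by
        have e1 : y ⬝ᵥ y = y ⬝ᵥ (signlessLaplacian G *ᵥ o) - ν * (y ⬝ᵥ o) := by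
          rw [hy]
          rw [dotProduct_sub, dotProduct_smul, smul_eq_mul]
        have e2 : y ⬝ᵥ (signlessLaplacian G *ᵥ o) = (signlessLaplacian G *ᵥ y) ⬝ᵥ o :=
          (sL_dot G y o).symm
        rw [e2, hQy, smul_dotProduct, smul_eq_mul, hdoty] at e1
        rw [e1]
        ring
      funext i
      have hnn : ∀ j ∈ Finset.univ, 0 ≤ y j * y j := fun j _ => mul_self_nonneg _
      have : ∀ j ∈ Finset.univ, y j * y j = 0 := by
        rw [← Finset.sum_eq_zero_iff_of_nonneg hnn]
        simpa [dotProduct] using hyy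
      have := this i (Finset.mem_univ i)
      exact mul_self_eq_zero.mp this
    exact ⟨y, hyne, hQy, hsumy⟩
  refine ⟨μ₁, μ₂, hμne, fun μ => ⟨?_, ?_⟩⟩
  · -- main ⇒ μ₁ or μ₂
    rintro ⟨x, hx, hQx, hsumx⟩
    set o : Fin n → ℝ := fun _ => (1:ℝ) with ho
    have hzv : ((signlessLaplacian G *ᵥ (signlessLaplacian G *ᵥ o))
        - (a:ℝ) • (signlessLaplacian G *ᵥ o) + (2*(b:ℝ)) • o) = 0 := by
      funext v
      simp only [Pi.add_apply, Pi.sub_apply, Pi.smul_apply, smul_eq_mul, Pi.zero_apply, ho]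
      have := hvec v
      simp only [ho] at this
      linarith [this]
    have hkey : (μ^2 - (a:ℝ)*μ + 2*b) * (∑ i, x i) = 0 := by
      have h0 : ((signlessLaplacian G *ᵥ (signlessLaplacian G *ᵥ o))
          - (a:ℝ) • (signlessLaplacian G *ᵥ o) + (2*(b:ℝ)) • o) ⬝ᵥ x = 0 := by
        rw [hzv, zero_dotProduct]
      have e1 : (signlessLaplacian G *ᵥ (signlessLaplacian G *ᵥ o)) ⬝ᵥ x
          = μ^2 * (o ⬝ᵥ x) := by
        rw [sL_dot, hQx, dotProduct_smul, smul_eq_mul, sL_dot, hQx,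
          dotProduct_smul, smul_eq_mul]
        ring
      have e2 : (signlessLaplacian G *ᵥ o) ⬝ᵥ x = μ * (o ⬝ᵥ x) := by
        rw [sL_dot, hQx, dotProduct_smul, smul_eq_mul]
      rw [add_dotProduct, sub_dotProduct, smul_dotProduct,
        smul_dotProduct, e1, e2] at h0
      have hox : o ⬝ᵥ x = ∑ i, x i := by simp [dotProduct, ho]
      rw [hox] at h0
      simp only [smul_eq_mul] at h0
      linear_combination h0
    have hquad : μ^2 - (a:ℝ)*μ + 2*b = 0 := by
      rcases mul_eq_zero.mp hkey with h | h
      · exact h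
      · exact absurd h hsumx
    have hfact : (μ - μ₁) * (μ - μ₂) = 0 := by
      have hexp : (μ - μ₁) * (μ - μ₂) = μ^2 - (μ₁+μ₂)*μ + μ₁*μ₂ := by ring
      rw [hexp, hsum, hprod]
      exact hquad
    rcases mul_eq_zero.mp hfact with h | h
    · exact Or.inl (sub_eq_zero.mp h)
    · exact Or.inr (sub_eq_zero.mp h)
  · rintro (rfl | rfl)
    · exact hmk μ₁ μ₂ hsum hprod (Ne.symm hμne)
    · exact hmk μ₂ μ₁ (by linarith) (by rw [mul_comm]; exact hprod) hμne

end Backward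

theorem stmt9 {n : ℕ} (G : SimpleGraph (Fin n)) [DecidableRel G.Adj]
    (hconn : G.Connected) :
    (∃ μ₁ μ₂ : ℝ, μ₁ ≠ μ₂ ∧
        ∀ μ, IsMainEig (signlessLaplacian G) μ ↔ (μ = μ₁ ∨ μ = μ₂)) ↔
      (∃! p : ℕ × ℕ, ParabolicPair G p) := by
  have hne : Nonempty (Fin n) := hconn.nonempty
  exact ⟨forward_dir G hne, backward_dir G hne⟩
end

section
/- If a tree T satisfies s(v) = −d(v)² + a·d(v) for every vertex v (i.e., T is 2-walk (a, 0)-parabolic with b = 0), then a = Δ + 1 where Δ is the maximum degree, and T is a star. -/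
open Matrix Finset

/-- `T` is a star: there is a centre adjacent to all other vertices,
each of which has degree 1. -/
def IsStarGraph {n : ℕ} (T : SimpleGraph (Fin n)) [DecidableRel T.Adj] : Prop :=
  ∃ c, ∀ v, v ≠ c → T.Adj c v ∧ T.degree v = 1

/-- `T` is a balanced double star `S_{n/2,n/2}`: two adjacent centres of degree `n/2`,
all other vertices pendant and attached to one of the centres. -/
def IsBalancedDoubleStar {n : ℕ} (T : SimpleGraph (Fin n)) [DecidableRel T.Adj] : Prop :=
  Even n ∧ ∃ c₁ c₂, c₁ ≠ c₂ ∧ T.Adj c₁ c₂ ∧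
    T.degree c₁ = n / 2 ∧ T.degree c₂ = n / 2 ∧
    ∀ v, v ≠ c₁ → v ≠ c₂ → T.degree v = 1 ∧ (T.Adj c₁ v ∨ T.Adj c₂ v)

/-- If all neighbours of `u` are leaves, then any walk starting at `u` (or at a
neighbour of `u`) ends at `u` or at a neighbour of `u`. -/
lemma walk_closure_aux {n : ℕ} (T : SimpleGraph (Fin n)) [DecidableRel T.Adj] (u : Fin n)
    (hleaf : ∀ w, T.Adj u w → T.degree w = 1) :
    ∀ {x v : Fin n}, T.Walk x v → (x = u ∨ T.Adj u x) → (v = u ∨ T.Adj u v) := by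
  intro x v p
  induction p with
  | nil => exact id
  | @cons x y v hxy p ih =>
    intro hx
    apply ih
    rcases hx with rfl | hux
    · right; exact hxy
    · left
      have hd : T.degree x = 1 := hleaf x hux
      have hcard : (T.neighborFinset x).card = 1 := by
        rwa [T.card_neighborFinset_eq_degree]
      obtain ⟨z, hz⟩ := Finset.card_eq_one.mp hcard
      have hu : u ∈ T.neighborFinset x := by
        rw [SimpleGraph.mem_neighborFinset]; exact hux.symm
      have hy : y ∈ T.neighborFinset x := by
        rw [SimpleGraph.mem_neighborFinset]; exact hxy
      rw [hz, Finset.mem_singleton] at hu hy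
      rw [hy, ← hu]

theorem stmt14 {n : ℕ} (hn : 3 ≤ n) (T : SimpleGraph (Fin n)) [DecidableRel T.Adj]
    (htree : T.Connected ∧ T.IsAcyclic) (a : ℕ) (ha : 0 < a)
    (h : ∀ v, (walkSum T v : ℤ) = -(T.degree v : ℤ) ^ 2 + a * T.degree v) :
    a = T.maxDegree + 1 ∧ IsStarGraph T := by
  haveI : Nontrivial (Fin n) := Fin.nontrivial_iff_two_le.mpr (by omega)
  -- every vertex has positive degree
  have hdegpos : ∀ v, 0 < T.degree v := by
    intro v
    obtain ⟨w, hw⟩ := exists_ne v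
    obtain ⟨p⟩ := htree.1.preconnected v w
    cases p with
    | nil => exact absurd rfl hw
    | cons hadj _ =>
      rw [SimpleGraph.degree_pos_iff_exists_adj]
      exact ⟨_, hadj⟩
  -- sum of degrees is 2(n-1)
  have hT : T.IsTree := ⟨htree.1, htree.2⟩
  have hedge : T.edgeFinset.card + 1 = n := by
    have := hT.card_edgeFinset
    simpa using this
  have hsumdeg : ∑ v, T.degree v = 2 * (n - 1) := by
    rw [T.sum_degrees_eq_twice_card_edges]
    omega
  -- a leaf exists
  have hleaf : ∃ ℓ, T.degree ℓ = 1 := by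
    by_contra hc
    push_neg at hc
    have h2 : ∀ v ∈ Finset.univ, 2 ≤ T.degree v := by
      intro v _
      have := hdegpos v
      have := hc v
      omega
    have := Finset.card_nsmul_le_sum (f := fun v => T.degree v) Finset.univ 2 h2
    simp only [Finset.card_univ, Fintype.card_fin, smul_eq_mul] at this
    omega
  obtain ⟨ℓ, hℓ⟩ := hleaf
  -- the neighbour of the leaf has degree a - 1
  have hcardℓ : (T.neighborFinset ℓ).card = 1 := by rwa [T.card_neighborFinset_eq_degree]
  obtain ⟨u, hu⟩ := Finset.card_eq_one.mp hcardℓ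
  have hws : walkSum T ℓ = T.degree u := by
    rw [walkSum, hu, Finset.sum_singleton]
  have hdu : (T.degree u : ℤ) = a - 1 := by
    have := h ℓ
    rw [hws, hℓ] at this
    push_cast at this
    linarith
  have hdu' : T.degree u + 1 = a := by
    have : ((T.degree u : ℤ) + 1) = a := by linarith
    exact_mod_cast this
  -- a ≤ Δ + 1
  have hle : a ≤ T.maxDegree + 1 := by
    have := T.degree_le_maxDegree u
    omega
  -- a ≥ Δ + 1, using a maximum-degree vertex
  obtain ⟨m, hm⟩ := T.exists_maximal_degree_vertex
  have hwm : T.degree m ≤ walkSum T m := by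
    have h1 : ∀ w ∈ T.neighborFinset m, 1 ≤ T.degree w := by
      intro w _; exact hdegpos w
    have := Finset.card_nsmul_le_sum (f := fun v => T.degree v) (T.neighborFinset m) 1 h1
    simpa [T.card_neighborFinset_eq_degree, walkSum] using this
  have hge : T.maxDegree + 1 ≤ a := by
    have hm1 : 1 ≤ T.degree m := hdegpos m
    have := h m
    have hw : (T.degree m : ℤ) ≤ walkSum T m := by exact_mod_cast hwm
    rw [this] at hw
    have hdm : (1 : ℤ) ≤ (T.degree m : ℤ) := by exact_mod_cast hm1
    have : (T.degree m : ℤ) + 1 ≤ a := by nlinarith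
    have : T.degree m + 1 ≤ a := by exact_mod_cast this
    omega
  have haΔ : a = T.maxDegree + 1 := le_antisymm hle hge
  refine ⟨haΔ, ?_⟩
  -- u has maximum degree, and all its neighbours are leaves
  have hduΔ : T.degree u = T.maxDegree := by omega
  have hwsu : (walkSum T u : ℤ) = T.degree u := by
    rw [h u, hduΔ, haΔ]
    push_cast
    ring
  have hwsu' : walkSum T u = (T.neighborFinset u).card := by
    rw [T.card_neighborFinset_eq_degree]
    exact_mod_cast hwsu
  have hall : ∀ w, T.Adj u w → T.degree w = 1 := by
    intro w hw
    by_contra hne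
    have hw' : w ∈ T.neighborFinset u := by rw [SimpleGraph.mem_neighborFinset]; exact hw
    have h2 : 2 ≤ T.degree w := by have := hdegpos w; omega
    have hsplit : walkSum T u =
        T.degree w + ∑ x ∈ (T.neighborFinset u).erase w, T.degree x :=
      (Finset.add_sum_erase _ _ hw').symm
    have h1 : ∀ x ∈ (T.neighborFinset u).erase w, 1 ≤ T.degree x := fun x _ => hdegpos x
    have hrest := Finset.card_nsmul_le_sum (f := fun v => T.degree v) ((T.neighborFinset u).erase w) 1 h1
    rw [Finset.card_erase_of_mem hw'] at hrest
    simp only [smul_eq_mul, one_mul] at hrest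
    have hcpos : 0 < (T.neighborFinset u).card := by
      rw [T.card_neighborFinset_eq_degree]; exact hdegpos u
    omega
  -- conclude: T is a star with centre u
  refine ⟨u, fun v hv => ?_⟩
  obtain ⟨p⟩ := htree.1.preconnected u v
  have := walk_closure_aux T u hall p (Or.inl rfl)
  rcases this with rfl | hadj
  · exact absurd rfl hv
  · exact ⟨hadj, hall v hadj⟩
end

section
/- If a tree T on n ≥ 3 vertices satisfies s(v) = −d(v)² + a·d(v) − 1 for every vertex v and some positive integer a with a² > 8, then T is a balanced double star S_{n/2, n/2} (two adjacent centers, each with the same number of pendant neighbors). -/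
open Matrix Finset

namespace StarAux
open SimpleGraph Walk

variable {V : Type*} {G : SimpleGraph V}

lemma concat_isPath {u v w : V} {p : G.Walk u v} (hp : p.IsPath) (h : G.Adj v w)
    (hw : w ∉ p.support) : (p.concat h).IsPath := by
  rw [SimpleGraph.Walk.isPath_def] at hp ⊢
  rw [SimpleGraph.Walk.support_concat]
  simp [List.concat_eq_append, List.nodup_append, hp, hw]
  intro a ha e
  exact hw (e ▸ ha)

lemma exists_concat {u v : V} (p : G.Walk u v) (h : u ≠ v) :
    ∃ (x : V) (q : G.Walk u x) (ha : G.Adj x v), p = q.concat ha := by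
  cases p with
  | nil => exact absurd rfl h
  | cons ha q => exact SimpleGraph.Walk.exists_cons_eq_concat ha q

lemma isPath_of_concat {u x v : V} {q : G.Walk u x} {ha : G.Adj x v}
    (h : (q.concat ha).IsPath) : q.IsPath := by
  rw [SimpleGraph.Walk.concat_eq_append] at h
  exact h.of_append_left

end StarAux

open SimpleGraph in
theorem stmt15 {n : ℕ} (hn : 3 ≤ n) (T : SimpleGraph (Fin n)) [DecidableRel T.Adj]
    (htree : T.Connected ∧ T.IsAcyclic) (a : ℕ) (ha : 0 < a) (ha8 : (a : ℤ) ^ 2 > 8)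
    (h : ∀ v, (walkSum T v : ℤ) = -(T.degree v : ℤ) ^ 2 + a * T.degree v - 1) :
    IsBalancedDoubleStar T := by
  classical
  obtain ⟨hconn, hacyc⟩ := htree
  have hT : T.IsTree := ⟨hconn, hacyc⟩
  have ha3 : 3 ≤ a := by
    by_contra hc
    have : a = 1 ∨ a = 2 := by omega
    rcases this with rfl | rfl <;> norm_num at ha8
  set k := a - 2 with hkdef
  have hak : a = k + 2 := by omega
  -- every vertex has a neighbour
  have hdeg1 : ∀ v, 1 ≤ T.degree v := by
    intro v
    obtain ⟨u, hu⟩ : ∃ u : Fin n, u ≠ v :=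
      Fintype.exists_ne_of_one_lt_card (by simp only [Fintype.card_fin]; omega) v
    obtain ⟨p⟩ := hconn.preconnected v u
    have hadj : ∃ w, T.Adj v w := by
      cases p with
      | nil => exact absurd rfl hu
      | cons hadj q => exact ⟨_, hadj⟩
    have := (SimpleGraph.degree_pos_iff_exists_adj (G := T) v).2 hadj
    omega
  -- walkSum ≥ degree
  have hws_ge : ∀ v, T.degree v ≤ walkSum T v := by
    intro v
    calc T.degree v = ∑ _u ∈ T.neighborFinset v, 1 := by
          rw [Finset.sum_const, smul_eq_mul, mul_one, card_neighborFinset_eq_degree]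
      _ ≤ walkSum T v := Finset.sum_le_sum fun u _ => hdeg1 u
  -- all degrees ≤ k
  have hdegk : ∀ v, T.degree v ≤ k := by
    intro v
    by_contra hc
    have hd : (a : ℤ) - 1 ≤ (T.degree v : ℤ) := by
      have h' : a - 1 ≤ T.degree v := by omega
      omega
    have hd1 : (1 : ℤ) ≤ (T.degree v : ℤ) := by exact_mod_cast hdeg1 v
    have hle : (T.degree v : ℤ) ≤ (walkSum T v : ℤ) := by exact_mod_cast hws_ge v
    have h2 := h v
    nlinarith [mul_nonneg (by linarith : (0:ℤ) ≤ (T.degree v : ℤ) - 1)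
      (by linarith : (0:ℤ) ≤ (T.degree v : ℤ) - ((a:ℤ) - 1))]
  -- leaf rule
  have hleaf : ∀ u v, T.degree u = 1 → T.Adj u v → T.degree v = k := by
    intro u v hu huv
    have hvmem : v ∈ T.neighborFinset u := (T.mem_neighborFinset u v).2 huv
    obtain ⟨x, hx⟩ := Finset.card_eq_one.1 (hu ▸ T.card_neighborFinset_eq_degree u)
    have hvx : v = x := by rw [hx] at hvmem; exact Finset.mem_singleton.1 hvmem
    have hws : walkSum T u = T.degree v := by
      rw [walkSum, hx, Finset.sum_singleton, hvx]
    have h2 := h u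
    rw [hws, hu] at h2
    have : (T.degree v : ℤ) = (k : ℤ) := by
      have hak' : (a : ℤ) = (k : ℤ) + 2 := by exact_mod_cast hak
      push_cast at h2
      linarith
    exact_mod_cast this
  -- degree sum
  have hsum : ∑ v, T.degree v = 2 * (n - 1) := by
    rw [T.sum_degrees_eq_twice_card_edges]
    have := hT.card_edgeFinset
    rw [Fintype.card_fin] at this
    omega
  -- exists a leaf
  have hex_leaf : ∃ ℓ, T.degree ℓ = 1 := by
    by_contra hc
    push_neg at hc
    have h2 : ∀ v : Fin n, 2 ≤ T.degree v := fun v => by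
      have := hdeg1 v; have := hc v; omega
    have : 2 * n ≤ ∑ v, T.degree v := by
      calc 2 * n = ∑ _v : Fin n, 2 := by
            rw [Finset.sum_const, smul_eq_mul, Finset.card_univ, Fintype.card_fin, mul_comm]
        _ ≤ _ := Finset.sum_le_sum fun v _ => h2 v
    omega
  -- some vertex with degree ≥ 2, and k ≥ 2
  have hex2 : ∃ v, 2 ≤ T.degree v := by
    by_contra hc
    push_neg at hc
    have : ∑ v, T.degree v ≤ n := by
      calc ∑ v, T.degree v ≤ ∑ _v : Fin n, 1 := Finset.sum_le_sum fun v _ => by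
            have := hc v; omega
        _ = n := by rw [Finset.sum_const, smul_eq_mul, Finset.card_univ, Fintype.card_fin, mul_one]
    omega
  have hk2 : 2 ≤ k := by
    obtain ⟨v, hv⟩ := hex2
    exact le_trans hv (hdegk v)
  obtain ⟨ℓ, hℓ⟩ := hex_leaf
  -- unique paths from ℓ
  choose P hP using fun v => hT.existsUnique_path ℓ v
  have hPp : ∀ v, (P v).IsPath := fun v => (hP v).1
  have hPu : ∀ v (q : T.Walk ℓ v), q.IsPath → q = P v := fun v q hq => (hP v).2 q hq
  set ht : Fin n → ℕ := fun v => (P v).length with hhtdef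
  have ht_zero : ∀ v, ht v = 0 → v = ℓ := fun v hv =>
    (SimpleGraph.Walk.eq_of_length_eq_zero hv).symm
  have ht_ℓ : ht ℓ = 0 := by
    have hnil : (SimpleGraph.Walk.nil : T.Walk ℓ ℓ) = P ℓ :=
      hPu ℓ _ SimpleGraph.Walk.IsPath.nil
    simp only [hhtdef, ← hnil, SimpleGraph.Walk.length_nil]
  -- lemma C: extension
  have hC : ∀ v u (hadj : T.Adj v u), u ∉ (P v).support → P u = (P v).concat hadj :=
    fun v u hadj hsup => (hPu u _ (StarAux.concat_isPath (hPp v) hadj hsup)).symm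
  -- lemma D: splitting
  have hD : ∀ v u (hadj : T.Adj u v) (hsup : u ∈ (P v).support),
      P v = (P u).concat hadj := by
    intro v u hadj hsup
    have h1 : (P v).takeUntil u hsup = P u := hPu u _ ((hPp v).takeUntil hsup)
    have h2 : (P v).dropUntil u hsup = SimpleGraph.Walk.cons hadj SimpleGraph.Walk.nil := by
      obtain ⟨q, hq1, hq2⟩ := hT.existsUnique_path u v
      have hcons := hq2 (SimpleGraph.Walk.cons hadj SimpleGraph.Walk.nil)
        (by simp [SimpleGraph.Walk.isPath_def, hadj.ne])
      exact (hq2 _ ((hPp v).dropUntil hsup)).trans hcons.symm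
    calc P v = ((P v).takeUntil u hsup).append ((P v).dropUntil u hsup) :=
          ((P v).take_spec hsup).symm
      _ = (P u).append (SimpleGraph.Walk.cons hadj SimpleGraph.Walk.nil) := by rw [h1, h2]
      _ = (P u).concat hadj := (SimpleGraph.Walk.concat_eq_append _ _).symm
  -- B1: adjacent heights differ by one
  have hB1 : ∀ u v, T.Adj u v → ht v = ht u + 1 ∨ ht u = ht v + 1 := by
    intro u v hadj
    by_cases hsup : u ∈ (P v).support
    · left
      rw [hhtdef]
      simp only
      rw [hD v u hadj hsup, SimpleGraph.Walk.length_concat]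
    · right
      rw [hhtdef]
      simp only
      rw [hC v u hadj.symm hsup, SimpleGraph.Walk.length_concat]
  -- B3: parent uniqueness
  have hB3 : ∀ v u u', T.Adj u v → T.Adj u' v → ht u + 1 = ht v → ht u' + 1 = ht v →
      u = u' := by
    intro v u u' h1 h2 e1 e2
    have hs : ∀ w (hw : T.Adj w v), ht w + 1 = ht v → w ∈ (P v).support := by
      intro w hw ew
      by_contra hsup
      have : ht w = ht v + 1 := by
        rw [hhtdef]; simp only
        rw [hC v w hw.symm hsup, SimpleGraph.Walk.length_concat]
      omega
    have d1 := hD v u h1 (hs u h1 e1)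
    have d2 := hD v u' h2 (hs u' h2 e2)
    have heq : (P u).concat h1 = (P u').concat h2 := by rw [← d1, ← d2]
    obtain ⟨huu, -⟩ := SimpleGraph.Walk.concat_inj heq
    exact huu
  -- B4: parent existence
  have hB4 : ∀ v, v ≠ ℓ → ∃ u, T.Adj u v ∧ ht u + 1 = ht v := by
    intro v hv
    obtain ⟨x, q, ha', heq⟩ := StarAux.exists_concat (P v) (Ne.symm hv)
    have hq : q.IsPath := StarAux.isPath_of_concat (heq ▸ hPp v)
    refine ⟨x, ha', ?_⟩
    rw [hhtdef]
    simp only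
    rw [← hPu x q hq, heq, SimpleGraph.Walk.length_concat]
  -- choose vertex of degree ≥ 2 with maximal height
  obtain ⟨v₀, hv₀S, hv₀max⟩ := Finset.exists_max_image
    (Finset.univ.filter fun v => 2 ≤ T.degree v) ht
    (by obtain ⟨v, hv⟩ := hex2; exact ⟨v, Finset.mem_filter.2 ⟨Finset.mem_univ v, hv⟩⟩)
  have hv₀2 : 2 ≤ T.degree v₀ := (Finset.mem_filter.1 hv₀S).2
  have hmax : ∀ w, 2 ≤ T.degree w → ht w ≤ ht v₀ := fun w hw =>
    hv₀max w (Finset.mem_filter.2 ⟨Finset.mem_univ w, hw⟩)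
  have hv₀ℓ : v₀ ≠ ℓ := fun e => by rw [e, hℓ] at hv₀2; omega
  obtain ⟨p₀, hp₀adj, hp₀ht⟩ := hB4 v₀ hv₀ℓ
  -- children of v₀ are leaves
  have hchild : ∀ u, T.Adj v₀ u → u ≠ p₀ → T.degree u = 1 := by
    intro u hu hne
    rcases hB1 v₀ u hu with h1 | h2
    · by_contra hc
      have h2u : 2 ≤ T.degree u := by have := hdeg1 u; omega
      have := hmax u h2u; omega
    · exact absurd (hB3 v₀ u p₀ hu.symm hp₀adj (by omega) hp₀ht) hne
  -- v₀ is adjacent to a leaf, so degree v₀ = k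
  obtain ⟨u₁, hu₁mem, hu₁ne⟩ := Finset.exists_mem_ne
    (by rw [T.card_neighborFinset_eq_degree]; omega : 1 < #(T.neighborFinset v₀)) p₀
  have hu₁adj : T.Adj v₀ u₁ := (T.mem_neighborFinset v₀ u₁).1 hu₁mem
  have hdv₀ : T.degree v₀ = k := hleaf u₁ v₀ (hchild u₁ hu₁adj hu₁ne) hu₁adj.symm
  -- splitting walkSum
  have hsplit : ∀ x y, T.Adj x y →
      walkSum T x = T.degree y + ∑ u ∈ (T.neighborFinset x).erase y, T.degree u := by
    intro x y hxy
    rw [walkSum, ← Finset.add_sum_erase _ _ ((T.mem_neighborFinset x y).2 hxy)]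
  -- degree of p₀ is k
  have hws_eq : ∀ x, T.degree x = k → (walkSum T x : ℤ) = 2 * k - 1 := by
    intro x hx
    rw [h x, hx, hak]
    push_cast
    ring
  have hdp₀ : T.degree p₀ = k := by
    have e1 := hsplit v₀ p₀ hp₀adj.symm
    have e2 : ∑ u ∈ (T.neighborFinset v₀).erase p₀, T.degree u = k - 1 := by
      have : ∀ u ∈ (T.neighborFinset v₀).erase p₀, T.degree u = 1 := by
        intro u hu
        obtain ⟨hne, hmem⟩ := Finset.mem_erase.1 hu
        exact hchild u ((T.mem_neighborFinset v₀ u).1 hmem) hne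
      rw [Finset.sum_congr rfl this, Finset.sum_const, smul_eq_mul, mul_one,
        Finset.card_erase_of_mem ((T.mem_neighborFinset v₀ p₀).2 hp₀adj.symm),
        T.card_neighborFinset_eq_degree, hdv₀]
    have e3 := hws_eq v₀ hdv₀
    rw [e1, e2] at e3
    omega
  -- p₀ ≠ ℓ, so p₀ has a parent q₀
  have hp₀ℓ : p₀ ≠ ℓ := fun e => by rw [e, hℓ] at hdp₀; omega
  obtain ⟨q₀, hq₀adj, hq₀ht⟩ := hB4 p₀ hp₀ℓ
  -- all neighbours of p₀ other than v₀ are leaves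
  have hv₀memp₀ : v₀ ∈ T.neighborFinset p₀ := (T.mem_neighborFinset p₀ v₀).2 hp₀adj
  have hrest_sum : ∑ u ∈ (T.neighborFinset p₀).erase v₀, T.degree u = k - 1 := by
    have e1 := hsplit p₀ v₀ hp₀adj
    have e3 := hws_eq p₀ hdp₀
    rw [e1, hdv₀] at e3
    omega
  have hrest_card : #((T.neighborFinset p₀).erase v₀) = k - 1 := by
    rw [Finset.card_erase_of_mem hv₀memp₀, T.card_neighborFinset_eq_degree, hdp₀]
  have hp₀leaves : ∀ u ∈ (T.neighborFinset p₀).erase v₀, T.degree u = 1 := by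
    intro u hu
    by_contra hc
    have h2u : 2 ≤ T.degree u := by have := hdeg1 u; omega
    have e1 : T.degree u + ∑ w ∈ ((T.neighborFinset p₀).erase v₀).erase u, T.degree w
        = ∑ w ∈ (T.neighborFinset p₀).erase v₀, T.degree w :=
      Finset.add_sum_erase _ (fun x => T.degree x) hu
    have e2 : #(((T.neighborFinset p₀).erase v₀).erase u)
        ≤ ∑ w ∈ ((T.neighborFinset p₀).erase v₀).erase u, T.degree w := by
      have := Finset.card_nsmul_le_sum (((T.neighborFinset p₀).erase v₀).erase u)
        (fun x => T.degree x) 1 (fun x _ => hdeg1 x)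
      simpa using this
    have e3 : #(((T.neighborFinset p₀).erase v₀).erase u) = k - 2 := by
      rw [Finset.card_erase_of_mem hu, hrest_card]
      omega
    omega
  -- q₀ is a leaf
  have hq₀nev₀ : q₀ ≠ v₀ := fun e => by rw [e] at hq₀ht; omega
  have hq₀mem : q₀ ∈ (T.neighborFinset p₀).erase v₀ :=
    Finset.mem_erase.2 ⟨hq₀nev₀, (T.mem_neighborFinset p₀ q₀).2 hq₀adj.symm⟩
  have hdq₀ : T.degree q₀ = 1 := hp₀leaves q₀ hq₀mem
  -- q₀ = ℓ
  have hq₀ℓ : q₀ = ℓ := by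
    by_contra hc
    obtain ⟨r, hradj, hrht⟩ := hB4 q₀ hc
    have hrp₀ : r ≠ p₀ := fun e => by rw [e] at hrht; omega
    have : 1 < #(T.neighborFinset q₀) := Finset.one_lt_card.2
      ⟨r, (T.mem_neighborFinset q₀ r).2 hradj.symm, p₀,
        (T.mem_neighborFinset q₀ p₀).2 hq₀adj, hrp₀⟩
    rw [T.card_neighborFinset_eq_degree, hdq₀] at this
    omega
  have htp₀ : ht p₀ = 1 := by rw [hq₀ℓ] at hq₀ht; omega
  have htv₀ : ht v₀ = 2 := by omega
  have hAdjℓp₀ : T.Adj ℓ p₀ := hq₀ℓ ▸ hq₀adj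
  -- neighbours of ℓ: only p₀
  have hℓnbr : ∀ w, T.Adj ℓ w → w = p₀ := by
    intro w hw
    obtain ⟨x, hx⟩ := Finset.card_eq_one.1 (hℓ ▸ T.card_neighborFinset_eq_degree ℓ)
    have h1 : w = x := Finset.mem_singleton.1 (hx ▸ (T.mem_neighborFinset ℓ w).2 hw)
    have h2 : p₀ = x := Finset.mem_singleton.1 (hx ▸ (T.mem_neighborFinset ℓ p₀).2 hAdjℓp₀)
    rw [h1, h2]
  -- height 1 vertices equal p₀
  have hht1 : ∀ w, ht w = 1 → w = p₀ := by
    intro w hw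
    have hwℓ : w ≠ ℓ := fun e => by rw [e, ht_ℓ] at hw; omega
    obtain ⟨u, hua, huh⟩ := hB4 w hwℓ
    have : u = ℓ := ht_zero u (by omega)
    exact hℓnbr w (this ▸ hua)
  -- Claim X: all vertices other than p₀, v₀ are leaves
  have hX : ∀ w, w ≠ p₀ → w ≠ v₀ → T.degree w = 1 := by
    intro w hwp hwv
    by_contra hc
    have h2w : 2 ≤ T.degree w := by have := hdeg1 w; omega
    have hle : ht w ≤ 2 := htv₀ ▸ hmax w h2w
    rcases Nat.lt_or_ge (ht w) 1 with h0 | h1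
    · have : w = ℓ := ht_zero w (by omega)
      rw [this, hℓ] at h2w; omega
    rcases Nat.lt_or_ge (ht w) 2 with h1' | h2'
    · exact hwp (hht1 w (by omega))
    have e2 : ht w = 2 := by omega
    have hwℓ : w ≠ ℓ := fun e => by rw [e, ht_ℓ] at e2; omega
    obtain ⟨u, hua, huh⟩ := hB4 w hwℓ
    have hup₀ : u = p₀ := hht1 u (by omega)
    have : T.degree w = 1 := hp₀leaves w
      (Finset.mem_erase.2 ⟨hwv, (T.mem_neighborFinset p₀ w).2 (hup₀ ▸ hua)⟩)
    exact hc this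
  -- Claim Y: all other vertices attach to p₀ or v₀
  have hY : ∀ w, w ≠ p₀ → w ≠ v₀ → T.Adj p₀ w ∨ T.Adj v₀ w := by
    intro w hwp hwv
    by_cases e0 : w = ℓ
    · left; rw [e0]; exact hAdjℓp₀.symm
    obtain ⟨u, hua, huh⟩ := hB4 w e0
    by_cases eu0 : u = ℓ
    · exact absurd (hℓnbr w (eu0 ▸ hua)) hwp
    obtain ⟨r, hra, hrh⟩ := hB4 u eu0
    have hrw : r ≠ w := fun e => by rw [e] at hrh; omega
    have h2u : 2 ≤ T.degree u := by
      have : 1 < #(T.neighborFinset u) := Finset.one_lt_card.2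
        ⟨r, (T.mem_neighborFinset u r).2 hra.symm, w,
          (T.mem_neighborFinset u w).2 hua, hrw⟩
      rw [T.card_neighborFinset_eq_degree] at this
      omega
    by_cases eup : u = p₀
    · left; exact eup ▸ hua
    by_cases euv : u = v₀
    · right; exact euv ▸ hua
    have := hX u eup euv
    omega
  -- counting: n = 2k
  have hp₀nev₀ : p₀ ≠ v₀ := fun e => by rw [e] at hp₀ht; omega
  have hcount : n = 2 * k := by
    have hv₀mem : v₀ ∈ (Finset.univ : Finset (Fin n)).erase p₀ :=
      Finset.mem_erase.2 ⟨Ne.symm hp₀nev₀, Finset.mem_univ v₀⟩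
    have e1 : ∑ v, T.degree v
        = T.degree p₀ + ∑ v ∈ (Finset.univ : Finset (Fin n)).erase p₀, T.degree v :=
      (Finset.add_sum_erase _ (fun x => T.degree x) (Finset.mem_univ p₀)).symm
    have e2 : ∑ v ∈ (Finset.univ : Finset (Fin n)).erase p₀, T.degree v
        = T.degree v₀ + ∑ v ∈ ((Finset.univ : Finset (Fin n)).erase p₀).erase v₀,
            T.degree v :=
      (Finset.add_sum_erase _ (fun x => T.degree x) hv₀mem).symm
    have e3 : ∑ v ∈ ((Finset.univ : Finset (Fin n)).erase p₀).erase v₀, T.degree v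
        = n - 2 := by
      have hall : ∀ v ∈ ((Finset.univ : Finset (Fin n)).erase p₀).erase v₀,
          T.degree v = 1 := by
        intro v hv
        obtain ⟨hv1, hv2⟩ := Finset.mem_erase.1 hv
        obtain ⟨hv3, -⟩ := Finset.mem_erase.1 hv2
        exact hX v hv3 hv1
      rw [Finset.sum_congr rfl hall, Finset.sum_const, smul_eq_mul, mul_one,
        Finset.card_erase_of_mem hv₀mem, Finset.card_erase_of_mem (Finset.mem_univ p₀),
        Finset.card_univ, Fintype.card_fin]
      omega
    rw [e2, e3, hdv₀] at e1
    rw [hdp₀] at e1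
    omega
  refine ⟨⟨k, by omega⟩, p₀, v₀, hp₀nev₀, hp₀adj, ?_, ?_, ?_⟩
  · rw [hdp₀, hcount]; omega
  · rw [hdv₀, hcount]; omega
  · exact fun v hv1 hv2 => ⟨hX v hv1 hv2, hY v hv1 hv2⟩
end

section
/- There is no tree T satisfying s(v) = −d(v)² + a·d(v) − b for all vertices v with a a positive integer and b an integer with b ≥ 2 and a² − 8b > 0. -/
open Matrix Finset

section Aux
open SimpleGraph
variable {V : Type*} {G : SimpleGraph V}

lemma aux_dist_getVert_le (hconn : G.Connected) {r x : V} (p : G.Walk r x) :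
    ∀ i, G.dist r (p.getVert i) ≤ i := by
  intro i
  induction i with
  | zero => simp [p.getVert_zero]
  | succ i ih =>
    by_cases hi : i < p.length
    · have h1 : G.dist (p.getVert i) (p.getVert (i + 1)) = 1 :=
        SimpleGraph.dist_eq_one_iff_adj.mpr (p.adj_getVert_succ hi)
      have h2 := hconn.dist_triangle (u := r) (v := p.getVert i) (w := p.getVert (i + 1))
      omega
    · have h1 : p.getVert (i + 1) = x := p.getVert_of_length_le (by omega)
      have h2 : p.getVert i = x := p.getVert_of_length_le (by omega)
      rw [h1, ← h2]
      exact ih.trans (Nat.le_succ i)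

lemma aux_concat_path (hconn : G.Connected) {r y x : V} (p : G.Walk r y) (hp : p.IsPath)
    (hl : p.length = G.dist r y) (hyx : G.Adj y x) (hlt : G.dist r y ≤ G.dist r x) :
    (p.concat hyx).IsPath := by
  have hxs : x ∉ p.support := by
    intro hxs
    obtain ⟨j, hj, hjl⟩ := Walk.mem_support_iff_exists_getVert.mp hxs
    have hd := aux_dist_getVert_le hconn p j
    rw [hj] at hd
    have hj' : j = p.length := by omega
    rw [hj', p.getVert_length] at hj
    exact hyx.ne hj
  rw [SimpleGraph.Walk.isPath_def, SimpleGraph.Walk.support_concat]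
  simp [List.nodup_append, hp.support_nodup, hxs]
  exact fun a ha hax => hxs (hax ▸ ha)

lemma aux_adj_dist_ne (hconn : G.Connected) (hacyc : G.IsAcyclic) {r u w : V}
    (h : G.Adj u w) : G.dist r u ≠ G.dist r w := by
  intro heq
  rcases Nat.eq_zero_or_pos (G.dist r u) with h0 | hpos
  · have hu : r = u := hconn.dist_eq_zero_iff.mp h0
    have hw : r = w := hconn.dist_eq_zero_iff.mp (by omega)
    exact h.ne (hu ▸ hw)
  · obtain ⟨p, hp, hpl⟩ := hconn.exists_path_of_dist r u
    have hq : (p.concat h).IsPath := aux_concat_path hconn p hp hpl h (by omega)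
    obtain ⟨p', hp', hpl'⟩ := hconn.exists_path_of_dist r w
    have hequ : (⟨p.concat h, hq⟩ : G.Path r w) = ⟨p', hp'⟩ :=
      isAcyclic_iff_path_unique.mp hacyc _ _
    have : (p.concat h).length = p'.length := by rw [Subtype.mk_eq_mk.mp hequ]
    rw [SimpleGraph.Walk.length_concat] at this
    omega

lemma aux_parent_unique (hconn : G.Connected) (hacyc : G.IsAcyclic) {r x y1 y2 : V}
    (h1 : G.Adj y1 x) (h2 : G.Adj y2 x) (d1 : G.dist r y1 < G.dist r x)
    (d2 : G.dist r y2 < G.dist r x) : y1 = y2 := by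
  obtain ⟨p1, hp1, hl1⟩ := hconn.exists_path_of_dist r y1
  obtain ⟨p2, hp2, hl2⟩ := hconn.exists_path_of_dist r y2
  have hq1 := aux_concat_path hconn p1 hp1 hl1 h1 d1.le
  have hq2 := aux_concat_path hconn p2 hp2 hl2 h2 d2.le
  have hequ : (⟨p1.concat h1, hq1⟩ : G.Path r x) = ⟨p2.concat h2, hq2⟩ :=
    isAcyclic_iff_path_unique.mp hacyc _ _
  obtain ⟨hv, -⟩ := Walk.concat_inj (Subtype.mk_eq_mk.mp hequ)
  exact hv

lemma aux_adj_dist_ge (hconn : G.Connected) {r u w : V} (h : G.Adj u w) :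
    G.dist r u ≤ G.dist r w + 1 := by
  have h1 : G.dist w u = 1 := SimpleGraph.dist_eq_one_iff_adj.mpr h.symm
  have h2 := hconn.dist_triangle (u := r) (v := w) (w := u)
  omega

end Aux

set_option maxHeartbeats 1000000 in
theorem stmt16 {n : ℕ} (hn : 3 ≤ n) (T : SimpleGraph (Fin n)) [DecidableRel T.Adj]
    (htree : T.Connected ∧ T.IsAcyclic) (a : ℕ) (ha : 0 < a) (b : ℤ) (hb : 2 ≤ b)
    (hab : (a : ℤ) ^ 2 - 8 * b > 0)
    (h : ∀ v, (walkSum T v : ℤ) = -(T.degree v : ℤ) ^ 2 + a * T.degree v - b) :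
    False := by
  obtain ⟨hconn, hacyc⟩ := htree
  haveI : Nontrivial (Fin n) := Fin.nontrivial_iff_two_le.mpr (by omega)
  have hdegpos : ∀ v, 0 < T.degree v := by
    intro v
    rw [T.degree_pos_iff_exists_adj]
    obtain ⟨u, hu⟩ := exists_ne v
    obtain ⟨w⟩ := hconn.preconnected v u
    cases w with
    | nil => exact absurd rfl hu
    | cons hadj q => exact ⟨_, hadj⟩
  have htreeT : T.IsTree := ⟨hconn, hacyc⟩
  have hedge : T.edgeFinset.card + 1 = n := by
    rw [htreeT.card_edgeFinset, Fintype.card_fin]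
  have hleafex : ∃ r, T.degree r = 1 := by
    by_contra hno
    push_neg at hno
    have hsum := T.sum_degrees_eq_twice_card_edges
    have hge : (Finset.univ.card : ℕ) • 2 ≤ ∑ v, T.degree v :=
      Finset.card_nsmul_le_sum _ _ _ (fun v _ => by have := hdegpos v; have := hno v; omega)
    rw [Finset.card_univ, Fintype.card_fin, smul_eq_mul] at hge
    omega
  obtain ⟨r, hrdeg⟩ := hleafex
  obtain ⟨v0, -, hmax'⟩ :=
    Finset.exists_max_image Finset.univ (fun v => T.dist r v) ⟨r, Finset.mem_univ r⟩
  have hmax : ∀ v, T.dist r v ≤ T.dist r v0 := fun v => hmax' v (Finset.mem_univ v)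
  have hM2 : 2 ≤ T.dist r v0 := by
    by_contra hM1
    push_neg at hM1
    have hsub : Finset.univ.erase r ⊆ T.neighborFinset r := by
      intro v hv
      rw [Finset.mem_erase] at hv
      rw [SimpleGraph.mem_neighborFinset]
      have h0 : T.dist r v ≠ 0 := fun h0 => hv.1 (hconn.dist_eq_zero_iff.mp h0).symm
      have h1 : T.dist r v = 1 := by have := hmax v; have := hmax r; omega
      exact SimpleGraph.dist_eq_one_iff_adj.mp h1
    have hcl := Finset.card_le_card hsub
    rw [Finset.card_erase_of_mem (Finset.mem_univ r), Finset.card_univ, Fintype.card_fin,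
      SimpleGraph.card_neighborFinset_eq_degree, hrdeg] at hcl
    omega
  obtain ⟨m, hm⟩ : ∃ m, T.dist r v0 = m + 2 := ⟨T.dist r v0 - 2, by omega⟩
  obtain ⟨p, hp, hpl⟩ := hconn.exists_path_of_dist r v0
  have hgv : p.getVert (m + 2) = v0 := by
    rw [show m + 2 = p.length by omega]
    exact p.getVert_length
  set v1 := p.getVert (m + 1) with hv1def
  set v2 := p.getVert m with hv2def
  have hadj10 : T.Adj v1 v0 := by
    have := p.adj_getVert_succ (i := m + 1) (by omega)
    rwa [hgv] at this
  have hadj21 : T.Adj v2 v1 := p.adj_getVert_succ (by omega)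
  have hd1 : T.dist r v1 = m + 1 := by
    have hle := aux_dist_getVert_le hconn p (m + 1)
    have hge := aux_adj_dist_ge hconn (r := r) hadj10.symm
    rw [← hv1def] at hle
    omega
  have hd2 : T.dist r v2 = m := by
    have hle := aux_dist_getVert_le hconn p m
    have hge := aux_adj_dist_ge hconn (r := r) hadj21.symm
    rw [← hv2def] at hle
    omega
  have hld : ∀ x z, T.dist r x = m + 2 → T.Adj x z → T.neighborFinset x = {z} := by
    intro x z hx hxz
    apply Finset.Subset.antisymm
    · intro y hy
      rw [SimpleGraph.mem_neighborFinset] at hy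
      rw [Finset.mem_singleton]
      have hy1 := hmax y
      have hy2 : T.dist r y ≠ T.dist r x := aux_adj_dist_ne hconn hacyc hy.symm
      have hz1 := hmax z
      have hz2 : T.dist r z ≠ T.dist r x := aux_adj_dist_ne hconn hacyc hxz.symm
      exact aux_parent_unique (r := r) hconn hacyc hy.symm hxz.symm (by omega) (by omega)
    · rw [Finset.singleton_subset_iff, SimpleGraph.mem_neighborFinset]
      exact hxz
  have hN0 : T.neighborFinset v0 = {v1} := hld v0 v1 hm hadj10.symm
  have hws0 : walkSum T v0 = T.degree v1 := by
    simp only [walkSum]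
    rw [hN0, Finset.sum_singleton]
  have hdeg0 : T.degree v0 = 1 := by
    rw [← SimpleGraph.card_neighborFinset_eq_degree, hN0, Finset.card_singleton]
  have heq1 : (T.degree v1 : ℤ) = a - b - 1 := by
    have hh := h v0
    rw [hws0, hdeg0] at hh
    push_cast at hh
    linarith
  have hsplit : ∀ w ∈ T.neighborFinset v1, w = v2 ∨ T.dist r w = m + 2 := by
    intro w hw
    rw [SimpleGraph.mem_neighborFinset] at hw
    have h1 := hmax w
    have h2 : T.dist r w ≠ T.dist r v1 := aux_adj_dist_ne hconn hacyc hw.symm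
    have h3 := aux_adj_dist_ge hconn (r := r) hadj10
    have h4 := aux_adj_dist_ge hconn (r := r) hw
    by_cases hc : T.dist r w = m + 2
    · right; exact hc
    · left
      exact aux_parent_unique (r := r) hconn hacyc hw.symm hadj21 (by omega) (by omega)
  have hv0mem : v0 ∈ T.neighborFinset v1 := by
    rw [SimpleGraph.mem_neighborFinset]; exact hadj10
  have hv2mem : v2 ∈ T.neighborFinset v1 := by
    rw [SimpleGraph.mem_neighborFinset]; exact hadj21.symm
  have hv0ne2 : v0 ≠ v2 := by
    intro hh
    rw [← hh] at hd2
    omega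
  have hD2 : 2 ≤ T.degree v1 := by
    have hsub : ({v0, v2} : Finset (Fin n)) ⊆ T.neighborFinset v1 := by
      intro y hy
      rcases Finset.mem_insert.mp hy with rfl | hy
      · exact hv0mem
      · rw [Finset.mem_singleton] at hy; rw [hy]; exact hv2mem
    have := Finset.card_le_card hsub
    rwa [Finset.card_pair hv0ne2, SimpleGraph.card_neighborFinset_eq_degree] at this
  have hone : ∀ w ∈ (T.neighborFinset v1).erase v2, T.degree w = 1 := by
    intro w hw
    obtain ⟨hwne, hwmem⟩ := Finset.mem_erase.mp hw
    rcases hsplit w hwmem with hh | hh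
    · exact absurd hh hwne
    · have hwadj : T.Adj v1 w := by rwa [SimpleGraph.mem_neighborFinset] at hwmem
      have hNw : T.neighborFinset w = {v1} := hld w v1 hh hwadj.symm
      rw [← SimpleGraph.card_neighborFinset_eq_degree, hNw, Finset.card_singleton]
  have hwsN : walkSum T v1 = T.degree v2 + (T.degree v1 - 1) := by
    simp only [walkSum]
    rw [← Finset.add_sum_erase _ _ hv2mem]
    congr 1
    calc ∑ w ∈ (T.neighborFinset v1).erase v2, T.degree w
        = ∑ w ∈ (T.neighborFinset v1).erase v2, 1 := Finset.sum_congr rfl hone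
      _ = ((T.neighborFinset v1).erase v2).card := by simp
      _ = T.degree v1 - 1 := by
          rw [Finset.card_erase_of_mem hv2mem, SimpleGraph.card_neighborFinset_eq_degree]
  have heq2 : (T.degree v2 : ℤ) + T.degree v1 - 1 =
      -(T.degree v1 : ℤ) ^ 2 + a * T.degree v1 - b := by
    have hh := h v1
    rw [hwsN] at hh
    rw [Nat.cast_add, Nat.cast_sub (by omega : 1 ≤ T.degree v1), Nat.cast_one] at hh
    linarith
  have hEeq : (T.degree v2 : ℤ) = b * T.degree v1 - b + 1 := by
    linear_combination heq2 - (T.degree v1 : ℤ) * heq1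
  have hDc : (2 : ℤ) ≤ (T.degree v1 : ℤ) := by exact_mod_cast hD2
  have hdlt : (T.degree v1 : ℤ) < T.degree v2 := by
    nlinarith [mul_pos (show (0:ℤ) < b - 1 by linarith)
      (show (0:ℤ) < (T.degree v1 : ℤ) - 1 by linarith)]
  have hnb2 : ∀ w ∈ T.neighborFinset v2, 2 ≤ T.degree w := by
    intro w hw
    rw [SimpleGraph.mem_neighborFinset] at hw
    by_contra hlt
    have hw1 : T.degree w = 1 := by have := hdegpos w; omega
    have hNw : T.neighborFinset w = {v2} := by
      have hcard : (T.neighborFinset w).card = 1 := by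
        rw [SimpleGraph.card_neighborFinset_eq_degree, hw1]
      obtain ⟨x, hx⟩ := Finset.card_eq_one.mp hcard
      have hv2m : v2 ∈ T.neighborFinset w := by
        rw [SimpleGraph.mem_neighborFinset]; exact hw.symm
      rw [hx] at hv2m ⊢
      rw [Finset.mem_singleton] at hv2m
      rw [hv2m]
    have hws : walkSum T w = T.degree v2 := by
      simp only [walkSum]; rw [hNw, Finset.sum_singleton]
    have hh := h w
    rw [hws, hw1] at hh
    push_cast at hh
    linarith
  have hws2 : (T.neighborFinset v2).card • 2 ≤ walkSum T v2 :=
    Finset.card_nsmul_le_sum _ _ _ hnb2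
  rw [SimpleGraph.card_neighborFinset_eq_degree, smul_eq_mul] at hws2
  have hKeq : (T.degree v2 : ℤ) - ((a : ℤ) - 2) = (b - 1) * ((T.degree v1 : ℤ) - 2) := by
    linear_combination hEeq + heq1
  have hK : (0:ℤ) ≤ (T.degree v2 : ℤ) - ((a : ℤ) - 2) := by
    rw [hKeq]; exact mul_nonneg (by linarith) (by linarith)
  have hprod : (0:ℤ) ≤ (T.degree v2 : ℤ) * ((T.degree v2 : ℤ) - ((a : ℤ) - 2)) :=
    mul_nonneg (Nat.cast_nonneg _) hK
  have heq3 := h v2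
  have hws2' : (T.degree v2 : ℤ) * 2 ≤ (walkSum T v2 : ℤ) := by exact_mod_cast hws2
  nlinarith [hprod, heq3, hws2', hb]
end

section
/- Let G be a connected unicyclic graph with minimum degree 1 satisfying s(v) = −d(v)² + a·d(v) − b for all vertices v, with a a positive integer, b a non-negative integer, a² − 8b > 0. Then the graph G₀ obtained from G by deleting all pendant vertices has minimum degree at least 2 (hence G₀ is the cycle of G), and moreover a − b ≥ 4 and a ≥ 5. -/
open Matrix Finset

lemma mem_of_walk' {n : ℕ} {G : SimpleGraph (Fin n)} {S : Finset (Fin n)}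
    (hcl : ∀ x ∈ S, ∀ y, G.Adj x y → y ∈ S) :
    ∀ {a b : Fin n}, G.Walk a b → a ∈ S → b ∈ S := by
  intro a b w
  induction w with
  | nil => exact fun h => h
  | cons h p ih => exact fun ha => ih (hcl _ ha _ h)

lemma closed_eq_univ' {n : ℕ} {G : SimpleGraph (Fin n)} (hconn : G.Connected)
    {S : Finset (Fin n)} (hne : S.Nonempty)
    (hcl : ∀ x ∈ S, ∀ y, G.Adj x y → y ∈ S) : S = Finset.univ := by
  obtain ⟨s, hs⟩ := hne
  apply Finset.eq_univ_of_forall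
  intro x
  obtain ⟨w⟩ := hconn.preconnected s x
  exact mem_of_walk' hcl w hs

lemma pendant_nbr' {n : ℕ} {G : SimpleGraph (Fin n)} [DecidableRel G.Adj] {u v : Fin n}
    (h1 : G.degree u = 1) (hadj : G.Adj u v) : G.neighborFinset u = {v} := by
  have hv : v ∈ G.neighborFinset u := by simpa using hadj
  have hc : (G.neighborFinset u).card = 1 := by
    rw [G.card_neighborFinset_eq_degree]; exact h1
  obtain ⟨w, hw⟩ := Finset.card_eq_one.mp hc
  rw [hw] at hv ⊢
  simp at hv
  subst hv; rfl

lemma all_one' {α : Type*} {T : Finset α} {f : α → ℕ} (h1 : ∀ x ∈ T, 1 ≤ f x)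
    (hs : ∑ x ∈ T, f x = T.card) : ∀ x ∈ T, f x = 1 := by
  by_contra hc
  push_neg at hc
  obtain ⟨x0, hx0, hne⟩ := hc
  have hlt : ∑ _x ∈ T, (1:ℕ) < ∑ x ∈ T, f x :=
    Finset.sum_lt_sum h1 ⟨x0, hx0, lt_of_le_of_ne (h1 x0 hx0) (Ne.symm hne)⟩
  simp [hs] at hlt

set_option maxHeartbeats 1000000 in
set_option maxHeartbeats 1000000 in
theorem stmt18 {n : ℕ} (G : SimpleGraph (Fin n)) [DecidableRel G.Adj]
    (hconn : G.Connected) (huni : G.edgeFinset.card = n)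
    (hmindeg : ∃ v, G.degree v = 1)
    (a b : ℕ) (ha : 0 < a) (hab : (a : ℤ) ^ 2 - 8 * b > 0)
    (h : ∀ v, (walkSum G v : ℤ) = -(G.degree v : ℤ) ^ 2 + a * G.degree v - b) :
    (∀ v, 1 < G.degree v →
        2 ≤ ((G.neighborFinset v).filter (fun u => 1 < G.degree u)).card) ∧
    4 ≤ (a : ℤ) - b ∧ 5 ≤ a := by
  classical
  have hdegpos : ∀ {x y : Fin n}, G.Adj x y → 1 ≤ G.degree y := by
    intro x y hxy
    exact (G.degree_pos_iff_exists_adj y).mpr ⟨x, hxy.symm⟩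
  have hhand : ∑ v, G.degree v = 2 * n := by
    rw [G.sum_degrees_eq_twice_card_edges, huni]
  have hws : ∀ u v, G.degree u = 1 → G.Adj u v → walkSum G u = G.degree v := by
    intro u v h1 hadj
    unfold walkSum
    rw [pendant_nbr' h1 hadj, Finset.sum_singleton]
  have hpend : ∀ u v, G.degree u = 1 → G.Adj u v → (G.degree v : ℤ) = a - b - 1 := by
    intro u v h1 hadj
    have hu := h u
    rw [hws u v h1 hadj, h1] at hu
    push_cast at hu
    linarith
  have claim1 : ∀ v, 1 < G.degree v →
      2 ≤ ((G.neighborFinset v).filter (fun u => 1 < G.degree u)).card := by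
    intro v hv
    by_contra hlt
    push_neg at hlt
    set N := G.neighborFinset v with hN
    set F := N.filter (fun u => 1 < G.degree u) with hF
    set P := N.filter (fun u => ¬ 1 < G.degree u) with hPdef
    have hadjN : ∀ x ∈ N, G.Adj v x := fun x hx => by
      rw [hN, SimpleGraph.mem_neighborFinset] at hx; exact hx
    have hNcard : N.card = G.degree v := G.card_neighborFinset_eq_degree v
    have hPone : ∀ x ∈ P, G.degree x = 1 := by
      intro x hx
      rw [hPdef, Finset.mem_filter] at hx
      have := hdegpos (hadjN x hx.1)
      omega
    have hFP : F.card + P.card = G.degree v := by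
      rw [hF, hPdef, Finset.card_filter_add_card_filter_not, hNcard]
    have hsplit : ∑ x ∈ F, G.degree x + ∑ x ∈ P, G.degree x = walkSum G v := by
      rw [hF, hPdef]
      exact Finset.sum_filter_add_sum_filter_not N _ _
    have hsumP : ∑ x ∈ P, G.degree x = P.card := by
      rw [Finset.sum_congr rfl hPone]; simp
    have hF01 : F.card = 0 ∨ F.card = 1 := by omega
    rcases hF01 with h0 | h1
    · -- Case A : all neighbours pendant; G is a star, contradiction with edge count
      have hFempty : F = ∅ := Finset.card_eq_zero.mp h0
      have hall : ∀ x ∈ N, G.degree x = 1 := by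
        intro x hx
        apply hPone
        rw [hPdef, Finset.mem_filter]
        refine ⟨hx, fun hgt => ?_⟩
        have hxF : x ∈ F := by rw [hF, Finset.mem_filter]; exact ⟨hx, hgt⟩
        simp [hFempty] at hxF
      have hvN : v ∉ N := by rw [hN]; exact G.notMem_neighborFinset_self v
      have hcl : ∀ x ∈ insert v N, ∀ y, G.Adj x y → y ∈ insert v N := by
        intro x hx y hxy
        rcases Finset.mem_insert.mp hx with rfl | hx
        · exact Finset.mem_insert_of_mem
            (by rw [hN, SimpleGraph.mem_neighborFinset]; exact hxy)
        · have h1x := hall x hx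
          have hy : y ∈ G.neighborFinset x := by
            rw [SimpleGraph.mem_neighborFinset]; exact hxy
          rw [pendant_nbr' h1x (hadjN x hx).symm, Finset.mem_singleton] at hy
          rw [hy]
          exact Finset.mem_insert_self v N
      have huniv := closed_eq_univ' hconn ⟨v, Finset.mem_insert_self v N⟩ hcl
      have hcard : n = G.degree v + 1 := by
        have h2 : (insert v N).card = N.card + 1 := Finset.card_insert_of_notMem hvN
        rw [huniv, Finset.card_univ, Fintype.card_fin, hNcard] at h2
        omega
      have hwv : walkSum G v = G.degree v := by
        unfold walkSum
        rw [← hN, Finset.sum_congr rfl hall]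
        simp [hNcard]
      have hsum2 : ∑ x, G.degree x = G.degree v + walkSum G v := by
        rw [← huniv, Finset.sum_insert hvN]
        rfl
      rw [hhand, hwv] at hsum2
      omega
    · -- Case B : exactly one non-pendant neighbour u
      obtain ⟨u, hFu⟩ := Finset.card_eq_one.mp h1
      have huN : u ∈ N := by
        have : u ∈ F := by rw [hFu]; exact Finset.mem_singleton_self u
        exact Finset.mem_of_mem_filter u this
      have hue : 1 < G.degree u := by
        have : u ∈ F := by rw [hFu]; exact Finset.mem_singleton_self u
        rw [hF, Finset.mem_filter] at this
        exact this.2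
      have hadjvu : G.Adj v u := hadjN u huN
      have hPcard : P.card = G.degree v - 1 := by omega
      -- v has a pendant neighbour, so degree v = a - b - 1
      have hPne : P.Nonempty := by
        rw [← Finset.card_pos]; omega
      obtain ⟨w, hwP⟩ := hPne
      have hDv : (G.degree v : ℤ) = a - b - 1 :=
        hpend w v (hPone w hwP) (hadjN w (Finset.mem_of_mem_filter w hwP)).symm
      set D := G.degree v with hD
      set e := G.degree u with he
      -- walkSum v = e + (D - 1)
      have hwsv : (walkSum G v : ℤ) = e + (D - 1) := by
        have h3 : ∑ x ∈ F, G.degree x = e := by rw [hFu, Finset.sum_singleton]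
        have : (e : ℤ) + P.card = walkSum G v := by
          rw [← hsplit]; push_cast [h3, hsumP]; ring
        rw [← this]
        have hPc : (P.card : ℤ) = (D : ℤ) - 1 := by omega
        rw [hPc]
      have hav : (a : ℤ) = D + b + 1 := by linarith [hDv]
      have hee : (e : ℤ) = b * ((D : ℤ) - 1) + 1 := by
        linear_combination (h v) - hwsv + (D : ℤ) * hav
      have hD2 : 2 ≤ D := hv
      have hb1 : 1 ≤ b := by
        by_contra hb0
        have hb : b = 0 := by omega
        rw [hb] at hee
        have : (e : ℤ) = 1 := by rw [hee]; ring
        have : e = 1 := by exact_mod_cast this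
        omega
      -- walkSum u facts
      have hvNu : v ∈ G.neighborFinset u := by
        rw [SimpleGraph.mem_neighborFinset]; exact hadjvu.symm
      have hcardNu : (G.neighborFinset u).card = e := G.card_neighborFinset_eq_degree u
      have hBall : ∀ x ∈ (G.neighborFinset u).erase v, 1 ≤ G.degree x := by
        intro x hx
        exact hdegpos ((SimpleGraph.mem_neighborFinset _ _ _).mp (Finset.mem_of_mem_erase hx))
      have hBcard : ((G.neighborFinset u).erase v).card = e - 1 := by
        rw [Finset.card_erase_of_mem hvNu, hcardNu]
      have hwsu_split : ∑ x ∈ (G.neighborFinset u).erase v, G.degree x + G.degree v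
          = walkSum G u := Finset.sum_erase_add _ _ hvNu
      rcases Nat.lt_or_ge b 2 with hble | hb2
      · -- b = 1 : double star, contradiction via edge count
        have hb : b = 1 := by omega
        subst hb
        have heD : (e : ℤ) = D := by rw [hee]; ring
        have heDn : e = D := by exact_mod_cast heD
        have hwsu : (walkSum G u : ℤ) = 2 * D - 1 := by
          linear_combination (h u) + (e : ℤ) * hav - ((e : ℤ) - 2) * heD
        have hwsuN : walkSum G u = 2 * D - 1 := by
          have h2D : (2 : ℤ) * D - 1 = ((2 * D - 1 : ℕ) : ℤ) := by omega
          rw [h2D] at hwsu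
          exact_mod_cast hwsu
        have hBsum : ∑ x ∈ (G.neighborFinset u).erase v, G.degree x
            = ((G.neighborFinset u).erase v).card := by
          rw [hBcard]; omega
        have hB1 := all_one' hBall hBsum
        -- pendant neighbours of v
        have hA1 : ∀ x ∈ N.erase u, G.degree x = 1 := by
          intro x hx
          apply hPone
          rw [hPdef, Finset.mem_filter]
          refine ⟨Finset.mem_of_mem_erase hx, fun hgt => (Finset.ne_of_mem_erase hx) ?_⟩
          have hxF : x ∈ F := by rw [hF, Finset.mem_filter]
                                 exact ⟨Finset.mem_of_mem_erase hx, hgt⟩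
          rw [hFu, Finset.mem_singleton] at hxF
          exact hxF
        -- closure
        set S := N ∪ G.neighborFinset u with hS
        have hclS : ∀ x ∈ S, ∀ y, G.Adj x y → y ∈ S := by
          intro x hx y hxy
          by_cases hxv : x = v
          · subst hxv
            exact Finset.mem_union_left _
              (by rw [hN, SimpleGraph.mem_neighborFinset]; exact hxy)
          by_cases hxu : x = u
          · subst hxu
            exact Finset.mem_union_right _
              (by rw [SimpleGraph.mem_neighborFinset]; exact hxy)
          rcases Finset.mem_union.mp hx with hx' | hx'
          · have hx1 : G.degree x = 1 := hA1 x (Finset.mem_erase.mpr ⟨hxu, hx'⟩)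
            have hy : y ∈ G.neighborFinset x := by
              rw [SimpleGraph.mem_neighborFinset]; exact hxy
            rw [pendant_nbr' hx1 (hadjN x hx').symm, Finset.mem_singleton] at hy
            rw [hy]
            exact Finset.mem_union_right _ hvNu
          · have hx1 : G.degree x = 1 := hB1 x (Finset.mem_erase.mpr ⟨hxv, hx'⟩)
            have hy : y ∈ G.neighborFinset x := by
              rw [SimpleGraph.mem_neighborFinset]; exact hxy
            have hadjux : G.Adj u x := (SimpleGraph.mem_neighborFinset _ _ _).mp hx'
            rw [pendant_nbr' hx1 hadjux.symm, Finset.mem_singleton] at hy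
            rw [hy]
            exact Finset.mem_union_left _ huN
        have huniv : S = Finset.univ :=
          closed_eq_univ' hconn ⟨u, Finset.mem_union_left _ huN⟩ hclS
        have hvu : v ≠ u := G.ne_of_adj hadjvu
        set A := N.erase u with hA
        set B := (G.neighborFinset u).erase v with hB
        have hdisjAB : Disjoint A B := by
          rw [Finset.disjoint_left]
          intro x hxA hxB
          have hx1 := hA1 x hxA
          have hux : u ∈ G.neighborFinset x := by
            rw [SimpleGraph.mem_neighborFinset]
            exact ((SimpleGraph.mem_neighborFinset _ _ _).mp
              (Finset.mem_of_mem_erase hxB)).symm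
          rw [pendant_nbr' hx1 (hadjN x (Finset.mem_of_mem_erase hxA)).symm,
            Finset.mem_singleton] at hux
          exact hvu hux.symm
        have hvnotA : v ∉ A := fun hc =>
          G.notMem_neighborFinset_self v (Finset.mem_of_mem_erase hc)
        have hvnotB : v ∉ B := fun hc => (Finset.ne_of_mem_erase hc) rfl
        have hunotA : u ∉ A := fun hc => (Finset.ne_of_mem_erase hc) rfl
        have hunotB : u ∉ B := fun hc =>
          G.notMem_neighborFinset_self u (Finset.mem_of_mem_erase hc)
        have hdisj2 : Disjoint (A ∪ B) ({v, u} : Finset (Fin n)) := by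
          rw [Finset.disjoint_right]
          intro x hx
          rw [Finset.mem_insert, Finset.mem_singleton] at hx
          rcases hx with rfl | rfl
          · simp [Finset.mem_union, hvnotA, hvnotB]
          · simp [Finset.mem_union, hunotA, hunotB]
        have hsetEq : (Finset.univ : Finset (Fin n)) = (A ∪ B) ∪ {v, u} := by
          rw [← huniv]
          ext x
          simp only [hS, hA, hB, Finset.mem_union, Finset.mem_erase,
            Finset.mem_insert, Finset.mem_singleton]
          constructor
          · rintro (hx | hx)
            · by_cases hxu : x = u
              · exact Or.inr (Or.inr hxu)
              · exact Or.inl (Or.inl ⟨hxu, hx⟩)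
            · by_cases hxv : x = v
              · exact Or.inr (Or.inl hxv)
              · exact Or.inl (Or.inr ⟨hxv, hx⟩)
          · rintro ((⟨_, hx⟩ | ⟨_, hx⟩) | (rfl | rfl))
            · exact Or.inl hx
            · exact Or.inr hx
            · exact Or.inr hvNu
            · exact Or.inl huN
        have hAcard : A.card = D - 1 := by
          rw [hA, Finset.card_erase_of_mem huN, hNcard]
        have hBcard' : B.card = D - 1 := by rw [hBcard]; omega
        have hncard : n = (D - 1) + (D - 1) + 2 := by
          have hc := congrArg Finset.card hsetEq
          rw [Finset.card_univ, Fintype.card_fin, Finset.card_union_of_disjoint hdisj2,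
            Finset.card_union_of_disjoint hdisjAB, hAcard, hBcard'] at hc
          rw [hc]
          have : ({v, u} : Finset (Fin n)).card = 2 := by
            rw [Finset.card_insert_of_notMem (by simpa using hvu), Finset.card_singleton]
          omega
        have hsumEq : ∑ x, G.degree x
            = (D - 1) + (D - 1) + (G.degree v + G.degree u) := by
          rw [hsetEq, Finset.sum_union hdisj2, Finset.sum_union hdisjAB]
          have hsA : ∑ x ∈ A, G.degree x = D - 1 := by
            rw [Finset.sum_congr rfl hA1]; simp [hAcard]
          have hsB : ∑ x ∈ B, G.degree x = D - 1 := by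
            rw [Finset.sum_congr rfl hB1]; simp [hBcard']
          rw [hsA, hsB, Finset.sum_pair hvu]
        rw [hhand, ← hD, ← he] at hsumEq
        omega
      · -- b ≥ 2
        rcases Nat.lt_or_ge D 3 with hDle | hD3
        · -- D = 2
          have hDeq : D = 2 := by omega
          have hD2' : (D : ℤ) = 2 := by exact_mod_cast hDeq
          have heb : (e : ℤ) = b + 1 := by rw [hee, hD2']; ring
          have hebn : e = b + 1 := by exact_mod_cast heb
          have hwsu : (walkSum G u : ℤ) = b + 2 := by
            linear_combination (h u) + (e : ℤ) * hav
              + ((2 : ℤ) - (e : ℤ)) * heb + (e : ℤ) * hD2'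
          have hwsuN : walkSum G u = b + 2 := by exact_mod_cast hwsu
          have hBsum : ∑ x ∈ (G.neighborFinset u).erase v, G.degree x
              = ((G.neighborFinset u).erase v).card := by
            rw [hBcard]
            omega
          have hB1 := all_one' hBall hBsum
          have hBne : ((G.neighborFinset u).erase v).Nonempty := by
            rw [← Finset.card_pos, hBcard]; omega
          obtain ⟨p, hp⟩ := hBne
          have hp1 : G.degree p = 1 := hB1 p hp
          have hadjup : G.Adj u p :=
            (SimpleGraph.mem_neighborFinset _ _ _).mp (Finset.mem_of_mem_erase hp)
          have := hpend p u hp1 hadjup.symm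
          -- (e : ℤ) = a - b - 1 = D = 2, but e = b + 1 ≥ 3
          omega
        · -- D ≥ 3 : arithmetic contradiction
          have hwsu_ge : (e : ℤ) ≤ (walkSum G u : ℤ) := by
            have hle : (G.neighborFinset u).card ≤ ∑ x ∈ G.neighborFinset u, G.degree x := by
              calc (G.neighborFinset u).card
                  = ∑ _x ∈ G.neighborFinset u, 1 := by simp
                _ ≤ ∑ x ∈ G.neighborFinset u, G.degree x :=
                  Finset.sum_le_sum (fun x hx =>
                    hdegpos ((SimpleGraph.mem_neighborFinset _ _ _).mp hx))
            rw [hcardNu] at hle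
            exact_mod_cast hle
          have hb2' : (2 : ℤ) ≤ b := by exact_mod_cast hb2
          have hD3' : (3 : ℤ) ≤ D := by exact_mod_cast hD3
          set t : ℤ := (D : ℤ) - 1 with ht
          have ht2 : (2 : ℤ) ≤ t := by omega
          have key : (e : ℤ) ^ 2 - ((a : ℤ) - 1) * e + b
              = t * ((t - 1) * b * ((b : ℤ) - 1) - 1) := by
            rw [hee, hav, ht]; ring
          have hbb : (2 : ℤ) ≤ (b : ℤ) * ((b : ℤ) - 1) := by
            have := mul_le_mul hb2' (by linarith : (1 : ℤ) ≤ (b : ℤ) - 1)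
              (by linarith) (by linarith)
            linarith
          have h5 : (2 : ℤ) ≤ (t - 1) * b * ((b : ℤ) - 1) := by
            have h6 := mul_le_mul (by linarith : (1 : ℤ) ≤ t - 1) hbb
              (by linarith) (by linarith)
            calc (2 : ℤ) = 1 * 2 := by ring
            _ ≤ (t - 1) * ((b : ℤ) * ((b : ℤ) - 1)) := h6
            _ = (t - 1) * b * ((b : ℤ) - 1) := by ring
          have hpos : 0 < t * ((t - 1) * b * ((b : ℤ) - 1) - 1) := by
            have h7 := mul_le_mul ht2 (by linarith : (1 : ℤ) ≤ (t - 1) * b * ((b : ℤ) - 1) - 1)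
              (by linarith) (by linarith)
            linarith
          have hu2 := h u
          linarith [hu2, hwsu_ge, key, hpos]
  -- Parts 2 and 3
  obtain ⟨w, hw1⟩ := hmindeg
  have hwc : 0 < (G.neighborFinset w).card := by
    rw [G.card_neighborFinset_eq_degree, hw1]; omega
  obtain ⟨v, hvw⟩ := Finset.card_pos.mp hwc
  have hadjwv : G.Adj w v := (SimpleGraph.mem_neighborFinset _ _ _).mp hvw
  have hDv : (G.degree v : ℤ) = a - b - 1 := hpend w v hw1 hadjwv
  have hv1 : 1 ≤ G.degree v := hdegpos hadjwv
  have hv2 : 2 ≤ G.degree v := by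
    by_contra hc
    have hveq : G.degree v = 1 := by omega
    have hNw : G.neighborFinset w = {v} := pendant_nbr' hw1 hadjwv
    have hNv : G.neighborFinset v = {w} := pendant_nbr' hveq hadjwv.symm
    have hwv : w ≠ v := G.ne_of_adj hadjwv
    have hcl : ∀ x ∈ ({w, v} : Finset (Fin n)), ∀ y, G.Adj x y →
        y ∈ ({w, v} : Finset (Fin n)) := by
      intro x hx y hxy
      rw [Finset.mem_insert, Finset.mem_singleton] at hx
      have hy : y ∈ G.neighborFinset x := by
        rw [SimpleGraph.mem_neighborFinset]; exact hxy
      rcases hx with rfl | rfl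
      · rw [hNw, Finset.mem_singleton] at hy; rw [hy]; simp
      · rw [hNv, Finset.mem_singleton] at hy; rw [hy]; simp
    have huniv := closed_eq_univ' hconn ⟨w, by simp⟩ hcl
    have hn2 : n = 2 := by
      have hcu := congrArg Finset.card huniv
      rw [Finset.card_univ, Fintype.card_fin,
        Finset.card_insert_of_notMem (by simpa using hwv), Finset.card_singleton] at hcu
      omega
    have hsum : ∑ x, G.degree x = 2 := by
      rw [← huniv, Finset.sum_pair hwv, hw1, hveq]
    rw [hhand, hn2] at hsum
    omega
  have hc1 := claim1 v hv2
  have hsub : (G.neighborFinset v).filter (fun u => 1 < G.degree u)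
      ⊆ (G.neighborFinset v).erase w := by
    intro x hx
    rw [Finset.mem_filter] at hx
    rw [Finset.mem_erase]
    refine ⟨fun hxw => ?_, hx.1⟩
    rw [hxw, hw1] at hx
    omega
  have hle := Finset.card_le_card hsub
  have hcerase : ((G.neighborFinset v).erase w).card = G.degree v - 1 := by
    rw [Finset.card_erase_of_mem (by rw [SimpleGraph.mem_neighborFinset]; exact hadjwv.symm),
      G.card_neighborFinset_eq_degree]
  have hv3 : 3 ≤ G.degree v := by omega
  have hab4 : 4 ≤ (a : ℤ) - b := by
    have h3 : (3 : ℤ) ≤ (G.degree v : ℤ) := by exact_mod_cast hv3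
    linarith
  refine ⟨claim1, hab4, ?_⟩
  rcases Nat.eq_zero_or_pos b with hb0 | hbpos
  · subst hb0
    by_contra ha5
    push_neg at ha5
    have ha4 : a = 4 := by omega
    subst ha4
    have hdv3 : G.degree v = 3 := by
      have : (G.degree v : ℤ) = 3 := by rw [hDv]; norm_num
      exact_mod_cast this
    have hwsvZ : (walkSum G v : ℤ) = 3 := by rw [h v, hdv3]; norm_num
    have hwsvN : walkSum G v = 3 := by exact_mod_cast hwsvZ
    have hsumN : ∑ x ∈ G.neighborFinset v, G.degree x = (G.neighborFinset v).card := by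
      rw [G.card_neighborFinset_eq_degree, hdv3]
      exact hwsvN
    have hall := all_one'
      (fun x hx => hdegpos ((SimpleGraph.mem_neighborFinset _ _ _).mp hx)) hsumN
    have hfe : (G.neighborFinset v).filter (fun u => 1 < G.degree u) = ∅ := by
      rw [Finset.filter_eq_empty_iff]
      intro x hx
      rw [hall x hx]
      omega
    rw [hfe] at hc1
    simp at hc1
  · have hb1 : (1 : ℤ) ≤ b := by exact_mod_cast hbpos
    have h5 : (5 : ℤ) ≤ a := by linarith
    exact_mod_cast h5
end
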